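/- arXiv:1902.08372 — 8 statements merged into one kernel-verified Lean document; each statement's English description precedes it below -/
import Mathlib

section
/- Let l be a finite Borel measure on ℝ and a ≤ b real numbers. Let (g_α) be a decreasing net of functions from [a,b] to [0,∞) (i.e., g_β ≤ g_α pointwise whenever α ≤ β), each of which is nonincreasing and left-continuous on [a,b], converging pointwise to a function g, and suppose at least one g_γ is bounded. Then the net of Lebesgue integrals ∫_{[a,b]} g_α dl converges to ∫_{[a,b]} g dl. -/
/-!
The integrals form an antitone net bounded below by `∫ g₀`, so it suffices to find a monotone
sequence of indices along which they converge to `∫ g₀`; along a sequence the monotone convergence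
theorem applies. A countably generated filter yields a sequence along which `g α t → g₀ t` at every
rational and every atom of `l` in `[a, b]`. The pointwise limit `h` along it is antitone and agrees
with `g₀` at those points. Two antitone functions that agree at the rationals differ only on a
countable set, since the gaps `(g₀ t, h t)` at points of disagreement are disjoint open intervals,
and a countable set without atoms is `l`-null.
-/

open MeasureTheory Set Filter Topology

theorem Filter.exists_seq_monotone_tendsto_of_atTop_le {ι : Type*} [Preorder ι]
    [IsDirectedOrder ι] [Nonempty ι] {F : Filter ι} [F.IsCountablyGenerated] (hF : atTop ≤ F) :
    ∃ xs : ℕ → ι, Monotone xs ∧ Tendsto xs atTop F := by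
  obtain ⟨s, hs⟩ := F.exists_antitone_basis
  choose β hβ using fun n => mem_atTop_sets.1 (hF (hs.mem n))
  choose c hleft hright using exists_ge_ge (α := ι)
  let xs : ℕ → ι := fun n => Nat.rec (β 0) (fun n x => c x (β (n + 1))) n
  have hxs_mono : Monotone xs := monotone_nat_of_le_succ fun n => hleft _ _
  have hβ_le : ∀ n, β n ≤ xs n := fun
    | 0 => le_rfl
    | n + 1 => hright _ _
  refine ⟨xs, hxs_mono, hs.tendsto_right_iff.2 fun m _ => ?_⟩
  filter_upwards [eventually_ge_atTop m] with n hn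
  exact hβ m _ ((hβ_le m).trans (hxs_mono hn))

theorem exists_seq_monotone_forall_tendsto_comp {ι κ X : Type*} [Preorder ι]
    [IsDirectedOrder ι] [Nonempty ι] [Countable κ] [TopologicalSpace X] [FirstCountableTopology X]
    {u : κ → ι → X} {y : κ → X} (hu : ∀ k, Tendsto (u k) atTop (𝓝 (y k))) :
    ∃ xs : ℕ → ι, Monotone xs ∧ ∀ k, Tendsto (u k ∘ xs) atTop (𝓝 (y k)) := by
  obtain ⟨xs, hxs_mono, hxs⟩ := exists_seq_monotone_tendsto_of_atTop_le
    (F := ⨅ k, comap (u k) (𝓝 (y k))) (le_iInf fun k => (hu k).le_comap)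
  exact ⟨xs, hxs_mono, fun k => tendsto_comap_iff.1 (tendsto_iInf.1 hxs k)⟩

theorem MeasureTheory.Measure.countable_setOf_measure_singleton_pos {α : Type*}
    [MeasurableSpace α] [MeasurableSingletonClass α] (μ : Measure α) [SFinite μ] :
    {x | 0 < μ {x}}.Countable :=
  Measure.countable_meas_pos_of_disjoint_iUnion measurableSet_singleton
    fun _ _ hxy => disjoint_singleton.2 hxy

theorem Antitone.tendsto_atTop_of_tendsto_comp {ι α : Type*} [Preorder ι] [TopologicalSpace α]
    [Preorder α] [OrderTopology α] {u : ι → α} {y : α} (hu : Antitone u) (hy : ∀ i, y ≤ u i)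
    {xs : ℕ → ι} (hxs : Tendsto (u ∘ xs) atTop (𝓝 y)) : Tendsto u atTop (𝓝 y) := by
  refine tendsto_order.2 ⟨fun z hz => Eventually.of_forall fun i => hz.trans_le (hy i),
    fun z hz => ?_⟩
  obtain ⟨n, hn⟩ := (hxs.eventually (gt_mem_nhds hz)).exists
  filter_upwards [eventually_ge_atTop (xs n)] with i hi
  exact (hu hi).trans_lt hn

theorem AntitoneOn.countable_setOf_lt_of_eq_rat {s : Set ℝ} {f h : ℝ → ℝ} (hs : s.OrdConnected)
    (hf : AntitoneOn f s) (hh : AntitoneOn h s) (hrat : ∀ q : ℚ, (q : ℝ) ∈ s → f q = h q) :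
    {t ∈ s | f t < h t}.Countable := by
  refine PairwiseDisjoint.countable_of_isOpen (s := fun t => Ioo (f t) (h t))
    (fun t₁ ht₁ t₂ ht₂ hne => ?_) (fun _ _ => isOpen_Ioo) (fun t ht => nonempty_Ioo.2 ht.2)
  wlog hlt : t₁ < t₂ generalizing t₁ t₂
  · exact (this t₂ ht₂ t₁ ht₁ hne.symm ((Ne.symm hne).lt_of_le (not_lt.1 hlt))).symm
  obtain ⟨q, hq₁, hq₂⟩ := exists_rat_btwn hlt
  have hq : (q : ℝ) ∈ s := hs.out ht₁.1 ht₂.1 ⟨hq₁.le, hq₂.le⟩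
  have hgap : h t₂ ≤ f t₁ := calc
    h t₂ ≤ h q := hh hq ht₂.1 hq₂.le
    _ = f q := (hrat q hq).symm
    _ ≤ f t₁ := hf ht₁.1 hq hq₁.le
  exact Set.disjoint_left.2 fun x hx₁ hx₂ => (hx₂.2.trans_le hgap).not_gt hx₁.1

theorem AntitoneOn.ae_restrict_eq_of_eq_rat_of_eq_atoms {μ : Measure ℝ} {s : Set ℝ}
    {f h : ℝ → ℝ} (hs : s.OrdConnected) (hf : AntitoneOn f s) (hh : AntitoneOn h s)
    (hrat : ∀ q : ℚ, (q : ℝ) ∈ s → f q = h q) (hatom : ∀ t ∈ s, 0 < μ {t} → f t = h t) :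
    f =ᵐ[μ.restrict s] h := by
  have hB : {t ∈ s | f t ≠ h t}.Countable := by
    refine ((hf.countable_setOf_lt_of_eq_rat hs hh hrat).union
      (hh.countable_setOf_lt_of_eq_rat hs hf fun q hq => (hrat q hq).symm)).mono ?_
    rintro t ⟨hts, hne⟩
    rcases hne.lt_or_gt with hlt | hgt
    exacts [Or.inl ⟨hts, hlt⟩, Or.inr ⟨hts, hgt⟩]
  rw [EventuallyEq, ae_restrict_iff' hs.measurableSet, ae_iff]
  refine measure_mono_null (fun t ht => ?_) ((measure_null_iff_singleton hB).2 fun t ht => ?_)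
  · exact Classical.not_imp.1 ht
  · by_contra hne
    exact ht.2 (hatom t ht.1 (pos_iff_ne_zero.2 hne))

theorem AntitoneOn.ae_restrict_tendsto_of_tendsto_rat_of_tendsto_atoms {μ : Measure ℝ}
    {s : Set ℝ} {f : ℕ → ℝ → ℝ} {F : ℝ → ℝ} (hs : s.OrdConnected) (hf : ∀ n, AntitoneOn (f n) s)
    (hF : AntitoneOn F s) (hmono : ∀ t ∈ s, Antitone fun n => f n t)
    (hle : ∀ n, ∀ t ∈ s, F t ≤ f n t)
    (hlim : ∀ t ∈ s, ((∃ q : ℚ, t = q) ∨ 0 < μ {t}) →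
      Tendsto (fun n => f n t) atTop (𝓝 (F t))) :
    ∀ᵐ t ∂μ.restrict s, Tendsto (fun n => f n t) atTop (𝓝 (F t)) := by
  have hinf : ∀ t ∈ s, Tendsto (fun n => f n t) atTop (𝓝 (⨅ n, f n t)) := fun t ht =>
    tendsto_atTop_ciInf (hmono t ht) ⟨F t, forall_mem_range.2 fun n => hle n t ht⟩
  have hinf_anti : AntitoneOn (fun t => ⨅ n, f n t) s :=
    antitoneOn_of_frequently_antitoneOn_of_tendsto (Frequently.of_forall hf) hinf
  have heq : ∀ t ∈ s, ((∃ q : ℚ, t = q) ∨ 0 < μ {t}) → F t = ⨅ n, f n t := fun t ht hE =>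
    tendsto_nhds_unique (hlim t ht hE) (hinf t ht)
  filter_upwards [hF.ae_restrict_eq_of_eq_rat_of_eq_atoms hs hinf_anti
    (fun q hq => heq q hq (Or.inl ⟨q, rfl⟩)) (fun t ht hpos => heq t ht (Or.inr hpos)),
    self_mem_ae_restrict hs.measurableSet] with t hFt hts
  exact hFt ▸ hinf t hts

theorem stmt0_general {ι : Type*} [Preorder ι] [IsDirected ι (· ≤ ·)] [Nonempty ι]
    (l : Measure ℝ) [IsFiniteMeasure l] (a b : ℝ)
    (g : ι → ℝ → ℝ) (g₀ : ℝ → ℝ)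
    (hdecr : ∀ ⦃α β : ι⦄, α ≤ β → ∀ t ∈ Icc a b, g β t ≤ g α t)
    (hanti : ∀ α, AntitoneOn (g α) (Icc a b))
    (hlim : ∀ t ∈ Icc a b, Tendsto (fun α => g α t) atTop (nhds (g₀ t))) :
    Tendsto (fun α => ∫ t in Icc a b, g α t ∂l) atTop
      (nhds (∫ t in Icc a b, g₀ t ∂l)) := by
  have hle : ∀ α, ∀ t ∈ Icc a b, g₀ t ≤ g α t := fun α t ht =>
    Antitone.le_of_tendsto (fun _ _ h => hdecr h t ht) (hlim t ht) α
  have hg₀ : AntitoneOn g₀ (Icc a b) :=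
    antitoneOn_of_frequently_antitoneOn_of_tendsto (Frequently.of_forall hanti) hlim
  have hint : ∀ α, IntegrableOn (g α) (Icc a b) l := fun α =>
    (hanti α).integrableOn_isCompact isCompact_Icc
  have hg₀_int : IntegrableOn g₀ (Icc a b) l := hg₀.integrableOn_isCompact isCompact_Icc
  let E : Set ℝ := {t ∈ Icc a b | (∃ q : ℚ, t = q) ∨ 0 < l {t}}
  have : Countable E := by
    refine Set.Countable.to_subtype (((countable_range ((↑) : ℚ → ℝ)).union
      l.countable_setOf_measure_singleton_pos).mono ?_)
    rintro t ⟨-, ⟨q, rfl⟩ | hpos⟩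
    exacts [Or.inl ⟨q, rfl⟩, Or.inr hpos]
  obtain ⟨xs, hxs_mono, hxs⟩ :=
    exists_seq_monotone_forall_tendsto_comp (u := fun (t : E) α => g α t) fun t => hlim t t.2.1
  have hxs_anti : ∀ t ∈ Icc a b, Antitone fun n => g (xs n) t :=
    fun t ht m n hmn => hdecr (hxs_mono hmn) t ht
  have hseq : Tendsto (fun n => ∫ t in Icc a b, g (xs n) t ∂l) atTop
      (𝓝 (∫ t in Icc a b, g₀ t ∂l)) :=
    integral_tendsto_of_tendsto_of_antitone (fun n => hint (xs n)) hg₀_int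
      (ae_restrict_of_forall_mem measurableSet_Icc hxs_anti)
      (AntitoneOn.ae_restrict_tendsto_of_tendsto_rat_of_tendsto_atoms ordConnected_Icc
        (fun n => hanti (xs n)) hg₀ hxs_anti (fun n => hle (xs n))
        fun t ht hE => hxs ⟨t, ht, hE⟩)
  exact Antitone.tendsto_atTop_of_tendsto_comp
    (fun α β hαβ => setIntegral_mono_on (hint β) (hint α) measurableSet_Icc (hdecr hαβ))
    (fun α => setIntegral_mono_on hg₀_int (hint α) measurableSet_Icc (hle α)) hseq

/-- Let `l` be a finite Borel measure on `ℝ` and `a ≤ b`. Let `(g α)` be a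
decreasing net of functions from `[a,b]` to `[0,∞)`, each nonincreasing and left-continuous
on `[a,b]`, converging pointwise on `[a,b]` to `g₀`, with at least one `g γ` bounded.
Then `∫_{[a,b]} g α dl → ∫_{[a,b]} g₀ dl`. -/
theorem stmt0 {ι : Type*} [Preorder ι] [IsDirected ι (· ≤ ·)] [Nonempty ι]
    (l : Measure ℝ) [IsFiniteMeasure l] (a b : ℝ) (hab : a ≤ b)
    (g : ι → ℝ → ℝ) (g₀ : ℝ → ℝ)
    (hnonneg : ∀ α, ∀ t ∈ Icc a b, 0 ≤ g α t)
    (hdecr : ∀ ⦃α β : ι⦄, α ≤ β → ∀ t ∈ Icc a b, g β t ≤ g α t)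
    (hanti : ∀ α, AntitoneOn (g α) (Icc a b))
    (hlc : ∀ α, ∀ t ∈ Icc a b, ContinuousWithinAt (g α) (Iic t) t)
    (hlim : ∀ t ∈ Icc a b, Tendsto (fun α => g α t) atTop (nhds (g₀ t)))
    (hbdd : ∃ γ M, ∀ t ∈ Icc a b, g γ t ≤ M) :
    Tendsto (fun α => ∫ t in Icc a b, g α t ∂l) atTop
      (nhds (∫ t in Icc a b, g₀ t ∂l)) :=
  stmt0_general l a b g g₀ hdecr hanti hlim
end

section
/- Let μ be a deficient topological measure on a locally compact Hausdorff space X, F a closed subset and C a compact subset of X. Then μ(F ∩ C) = inf{ μ_V(C) : V open, F ⊆ V }, where for an open set V we set μ_V(C) := inf{ μ(U ∩ V) : U open, C ⊆ U }. -/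
open MeasureTheory Set Filter Topology ENNReal

/-- A deficient topological measure on a topological space `X`: a set function with values in
`[0,∞]` (recorded on all sets, but constrained only on open and closed sets) that is finitely
additive on disjoint compact sets, inner regular on open sets with respect to compact sets,
and outer regular on closed sets with respect to open sets. -/
structure DeficientTopologicalMeasure (X : Type*) [TopologicalSpace X] where
  m : Set X → ℝ≥0∞
  additive : ∀ ⦃C K : Set X⦄, IsCompact C → IsCompact K → Disjoint C K →
    m (C ∪ K) = m C + m K
  innerRegular : ∀ ⦃U : Set X⦄, IsOpen U →
    m U = ⨆ (K : Set X) (_ : IsCompact K) (_ : K ⊆ U), m K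
  outerRegular : ∀ ⦃F : Set X⦄, IsClosed F →
    m F = ⨅ (U : Set X) (_ : IsOpen U) (_ : F ⊆ U), m U

/-- Monotonicity of `μ` between open sets. -/
lemma DTM.mono_open {X : Type*} [TopologicalSpace X] (μ : DeficientTopologicalMeasure X)
    {U W : Set X} (hU : IsOpen U) (hW : IsOpen W) (h : U ⊆ W) : μ.m U ≤ μ.m W := by
  rw [μ.innerRegular hU]
  refine iSup₂_le fun K hK => iSup_le fun hKU => ?_
  rw [μ.innerRegular hW]
  exact le_iSup₂_of_le K hK (le_iSup_of_le (hKU.trans h) le_rfl)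

/-- For a deficient topological measure `μ` on a locally compact Hausdorff
space, a closed set `F` and a compact set `C`,
`μ(F ∩ C) = inf{ μ_V(C) : V open, F ⊆ V }`, where
`μ_V(C) = inf{ μ(U ∩ V) : U open, C ⊆ U }`. -/
theorem stmt1 {X : Type*} [TopologicalSpace X] [LocallyCompactSpace X] [T2Space X]
    (μ : DeficientTopologicalMeasure X) (F C : Set X) (hF : IsClosed F) (hC : IsCompact C) :
    μ.m (F ∩ C) = ⨅ (V : Set X) (_ : IsOpen V) (_ : F ⊆ V),
      ⨅ (U : Set X) (_ : IsOpen U) (_ : C ⊆ U), μ.m (U ∩ V) := by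
  have hFC : IsClosed (F ∩ C) := hF.inter hC.isClosed
  refine le_antisymm ?_ ?_
  · refine le_iInf₂ fun V hV => le_iInf fun hFV => le_iInf₂ fun U hU => le_iInf fun hCU => ?_
    rw [μ.outerRegular hFC]
    exact iInf₂_le_of_le (U ∩ V) (hU.inter hV)
      (iInf_le_of_le (fun x hx => ⟨hCU hx.2, hFV hx.1⟩) le_rfl)
  · rw [μ.outerRegular hFC]
    refine le_iInf₂ fun W hW => le_iInf fun hsub => ?_
    -- separate the compact set `C \ W` from the closed set `F`
    have hK : IsCompact (C \ W) := hC.diff hW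
    have hdisj : Disjoint (C \ W) F := by
      rw [disjoint_left]
      rintro x ⟨hxC, hxW⟩ hxF
      exact hxW (hsub ⟨hxF, hxC⟩)
    obtain ⟨A, V, hA, hV, hKA, hFV, hAV⟩ := SeparatedNhds.of_isCompact_isClosed hK hF hdisj
    refine iInf₂_le_of_le V hV (iInf_le_of_le hFV (iInf₂_le_of_le (W ∪ A) (hW.union hA)
      (iInf_le_of_le (fun x hx => by
        by_cases h : x ∈ W
        exacts [Or.inl h, Or.inr (hKA ⟨hx, h⟩)]) ?_)))
    refine DTM.mono_open μ ((hW.union hA).inter hV) hW fun x hx => ?_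
    rcases hx with ⟨hWA, hxV⟩
    rcases hWA with h | h
    · exact h
    · exact absurd hxV (disjoint_left.mp hAV h)
end

section
/- Let μ be a deficient topological measure on a locally compact Hausdorff space X, f a bounded continuous real-valued function on X with f(X) ⊆ [a,b], and V an open set with μ(V) < ∞. Then the net (∫_K f dμ), indexed by the compact subsets K of V directed by inclusion, converges to ∫_V f dμ; that is, lim over compact K ⊆ V of [ aμ(K) + ∫_a^b μ(K ∩ f⁻¹([t,∞))) dt ] equals aμ(V) + ∫_a^b μ(V ∩ f⁻¹((t,∞))) dt. -/
open MeasureTheory Set Filter Topology ENNReal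

/-! Split the quasi-integral over `K` as `a μ(K) + ∫ g_K` with `g_K t = μ(K ∩ f⁻¹[t,∞))`; inner
regularity gives `μ(K) → μ(V)`. Put `G t = μ(V ∩ f⁻¹(t,∞))`. Every `g_K` lies below the left limit
of the antitone `G`, which equals `G` off its countably many jumps, so `∫ g_K ≤ ∫ G`. Conversely,
at the finitely many points of a fine grid `g_K` is eventually within `δ` of `G`, and since both
functions are antitone this bounds `∫ G - ∫ g_K` by a Riemann-sum error. -/
open intervalIntegral in
theorem integral_le_integral_add_of_antitone {f g : ℝ → ℝ} (hf : Antitone f)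
    (hg : Antitone g) {s t δ : ℝ} (hst : s ≤ t) (hfg : f t ≤ g t + δ) :
    ∫ x in s..t, f x ≤ (∫ x in s..t, g x) + (t - s) * (f s - f t) + (t - s) * δ := by
  have hf_le : ∫ x in s..t, f x ≤ ∫ _ in s..t, f s :=
    integral_mono_on hst hf.intervalIntegrable intervalIntegrable_const fun x hx => hf hx.1
  have hg_ge : ∫ _ in s..t, (f t - δ) ≤ ∫ x in s..t, g x :=
    integral_mono_on hst intervalIntegrable_const hg.intervalIntegrable fun x hx =>
      (sub_le_iff_le_add.2 hfg).trans (hg hx.2)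
  simp only [intervalIntegral.integral_const, smul_eq_mul] at hf_le hg_ge
  linarith

open Finset intervalIntegral in
theorem integral_le_integral_add_of_antitone_partition {f g : ℝ → ℝ} (hf : Antitone f)
    (hg : Antitone g) {T : ℕ → ℝ} (hT : Monotone T) {n : ℕ} {h δ : ℝ}
    (hstep : ∀ k < n, T (k + 1) - T k ≤ h) (hfg : ∀ k < n, f (T (k + 1)) ≤ g (T (k + 1)) + δ) :
    ∫ x in T 0..T n, f x ≤
      (∫ x in T 0..T n, g x) + h * (f (T 0) - f (T n)) + (T n - T 0) * δ := by
  have hpiece : ∀ k ∈ range n, ∫ x in T k..T (k + 1), f x ≤ (∫ x in T k..T (k + 1), g x) +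
      h * (f (T k) - f (T (k + 1))) + (T (k + 1) - T k) * δ := by
    intro k hk
    have hkn := mem_range.1 hk
    refine (integral_le_integral_add_of_antitone hf hg (hT k.le_succ) (hfg k hkn)).trans ?_
    gcongr
    · exact sub_nonneg.2 (hf (hT k.le_succ))
    · exact hstep k hkn
  calc ∫ x in T 0..T n, f x = ∑ k ∈ range n, ∫ x in T k..T (k + 1), f x :=
        (sum_integral_adjacent_intervals fun _ _ => hf.intervalIntegrable).symm
    _ ≤ _ := sum_le_sum hpiece
    _ = _ := by
      rw [sum_add_distrib, sum_add_distrib, sum_integral_adjacent_intervals fun _ _ =>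
        hg.intervalIntegrable, ← mul_sum, ← sum_mul, sum_range_sub', sum_range_sub]

theorem integral_le_integral_of_antitone_of_forall_lt {f g : ℝ → ℝ} (hf : Antitone f)
    {a b : ℝ} (hab : a ≤ b) (hg : IntervalIntegrable g volume a b)
    (hgf : ∀ ⦃s t⦄, s < t → g t ≤ f s) :
    ∫ x in a..b, g x ≤ ∫ x in a..b, f x := by
  have hae : ∀ᵐ t, g t ≤ f t := by
    filter_upwards [hf.countable_not_continuousAt.ae_notMem volume] with t ht
    have hleft : Tendsto f (𝓝[<] t) (𝓝 (f t)) :=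
      (not_not.1 ht).tendsto.mono_left nhdsWithin_le_nhds
    exact ge_of_tendsto hleft (eventually_nhdsWithin_of_forall fun s hs => hgf hs)
  exact intervalIntegral.integral_mono_ae hab hg hf.intervalIntegrable hae

theorem tendsto_integral_of_antitone {ι : Type*} {l : Filter ι} {G : ℝ → ℝ} {g : ι → ℝ → ℝ}
    (hG : Antitone G) (hg : ∀ i, Antitone (g i)) (hgG : ∀ i ⦃s t⦄, s < t → g i t ≤ G s)
    (hlim : ∀ t, ∀ c < G t, ∀ᶠ i in l, c < g i t) (a b : ℝ) :
    Tendsto (fun i => ∫ t in a..b, g i t) l (𝓝 (∫ t in a..b, G t)) := by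
  wlog hab : a ≤ b generalizing a b
  · simpa only [intervalIntegral.integral_symm a b, neg_neg] using (this b a (le_of_not_ge hab)).neg
  refine tendsto_order.2 ⟨fun c hc => ?_, fun c hc => Eventually.of_forall fun i =>
    (integral_le_integral_of_antitone_of_forall_lt hG hab (hg i).intervalIntegrable
      (hgG i)).trans_lt hc⟩
  set ε := (∫ t in a..b, G t) - c
  have hε0 : 0 < ε := sub_pos.2 hc
  have hGab : 0 ≤ (b - a) * (G a - G b) := mul_nonneg (sub_nonneg.2 hab) (sub_nonneg.2 (hG hab))
  obtain ⟨n, hn⟩ := exists_nat_gt (2 * (b - a) * (G a - G b) / ε)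
  have hn0 : (0 : ℝ) < n := lt_of_le_of_lt (div_nonneg (by linarith) hε0.le) hn
  set δ := ε / (2 * (b - a + 1)) with hδ
  set T : ℕ → ℝ := fun k => a + k * ((b - a) / n) with hT
  have hTmono : Monotone T := fun j k hjk => by simp only [hT]; gcongr
  have hT0 : T 0 = a := by simp [hT]
  have hTn : T n = b := by simp only [hT]; field_simp; ring
  have hgrid : ∀ᶠ i in l, ∀ k ∈ Finset.range n, G (T (k + 1)) ≤ g i (T (k + 1)) + δ := by
    refine (eventually_all_finset _).2 fun k _ => ?_
    filter_upwards [hlim (T (k + 1)) (G (T (k + 1)) - δ) (sub_lt_self _ (by positivity))]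
      with i hi
    linarith
  filter_upwards [hgrid] with i hi
  have hmesh : (b - a) / n * (G a - G b) < ε / 2 := by
    rw [div_lt_iff₀ hε0] at hn
    rw [div_mul_eq_mul_div, div_lt_iff₀ hn0]
    linarith
  have hdelta : (b - a) * δ < ε / 2 := by
    rw [hδ, mul_div_assoc', div_lt_iff₀ (by linarith)]
    nlinarith
  have hbound := integral_le_integral_add_of_antitone_partition hG (hg i) hTmono
    (h := (b - a) / n) (fun k _ => le_of_eq (by simp only [hT]; push_cast; ring))
    (fun k hk => hi k (Finset.mem_range.2 hk))
  rw [hT0, hTn] at hbound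
  linarith

namespace DeficientTopologicalMeasure

variable {X : Type*} [TopologicalSpace X] (μ : DeficientTopologicalMeasure X)

theorem mono_isCompact_isOpen {K U : Set X} (hK : IsCompact K) (hU : IsOpen U) (hKU : K ⊆ U) :
    μ.m K ≤ μ.m U := by
  rw [μ.innerRegular hU]
  exact le_iSup₂_of_le K hK (le_iSup_of_le hKU le_rfl)

theorem mono_isOpen {U W : Set X} (hU : IsOpen U) (hW : IsOpen W) (hUW : U ⊆ W) :
    μ.m U ≤ μ.m W := by
  rw [μ.innerRegular hU]
  exact iSup₂_le fun K hK => iSup_le fun hKU => μ.mono_isCompact_isOpen hK hW (hKU.trans hUW)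

theorem mono_isCompact [T2Space X] {C K : Set X} (hC : IsCompact C) (hK : IsCompact K)
    (hCK : C ⊆ K) : μ.m C ≤ μ.m K := by
  rw [μ.outerRegular hK.isClosed]
  exact le_iInf₂ fun U hU => le_iInf fun hKU => μ.mono_isCompact_isOpen hC hU (hCK.trans hKU)

instance (V : Set X) : Nonempty {K : Set X // IsCompact K ∧ K ⊆ V} :=
  ⟨⟨∅, isCompact_empty, empty_subset V⟩⟩

instance (V : Set X) : IsDirected {K : Set X // IsCompact K ∧ K ⊆ V} (· ≤ ·) :=
  ⟨fun K L => ⟨⟨K.1 ∪ L.1, K.2.1.union L.2.1, union_subset K.2.2 L.2.2⟩,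
    subset_union_left, subset_union_right⟩⟩

theorem tendsto_isCompact_subset [T2Space X] {U : Set X} (hU : IsOpen U) :
    Tendsto (fun K : {K : Set X // IsCompact K ∧ K ⊆ U} => μ.m K.1) atTop (𝓝 (μ.m U)) := by
  have hsup : μ.m U = ⨆ K : {K : Set X // IsCompact K ∧ K ⊆ U}, μ.m K.1 := by
    rw [μ.innerRegular hU, iSup_subtype]
    simp only [iSup_and]
  rw [hsup]
  exact tendsto_atTop_iSup fun K L hKL => μ.mono_isCompact K.2.1 L.2.1 hKL

theorem tendsto_toReal_isCompact_subset [T2Space X] {U : Set X} (hU : IsOpen U)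
    (hUfin : μ.m U ≠ ∞) :
    Tendsto (fun K : {K : Set X // IsCompact K ∧ K ⊆ U} => (μ.m K.1).toReal) atTop
      (𝓝 (μ.m U).toReal) :=
  (ENNReal.tendsto_toReal hUfin).comp (μ.tendsto_isCompact_subset hU)

theorem eventually_lt_toReal_inter [T2Space X] {U V F : Set X} (hU : IsOpen U) (hV : IsOpen V)
    (hF : IsClosed F) (hUV : U ⊆ V) (hUF : U ⊆ F) (hVfin : μ.m V ≠ ∞) {c : ℝ}
    (hc : c < (μ.m U).toReal) :
    ∀ᶠ K : {K : Set X // IsCompact K ∧ K ⊆ V} in atTop, c < (μ.m (K.1 ∩ F)).toReal := by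
  have hUfin : μ.m U ≠ ∞ := ne_top_of_le_ne_top hVfin (μ.mono_isOpen hU hV hUV)
  obtain ⟨C, hcC⟩ :=
    ((μ.tendsto_toReal_isCompact_subset hU hUfin).eventually (eventually_gt_nhds hc)).exists
  filter_upwards [eventually_ge_atTop ⟨C.1, C.2.1, C.2.2.trans hUV⟩] with K hCK
  have hKF : IsCompact (K.1 ∩ F) := K.2.1.inter_right hF
  refine hcC.trans_le (ENNReal.toReal_mono ?_ (μ.mono_isCompact C.2.1 hKF ?_))
  · exact ne_top_of_le_ne_top hVfin (μ.mono_isCompact_isOpen hKF hV (inter_subset_left.trans K.2.2))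
  · exact subset_inter hCK (C.2.2.trans hUF)

end DeficientTopologicalMeasure

theorem stmt2_general {X : Type*} [TopologicalSpace X] [T2Space X]
    (μ : DeficientTopologicalMeasure X) (f : X → ℝ) (hf : Continuous f)
    (a b : ℝ)
    (V : Set X) (hV : IsOpen V) (hVfin : μ.m V < ∞) :
    Tendsto (fun K : {K : Set X // IsCompact K ∧ K ⊆ V} =>
        a * (μ.m K.1).toReal + ∫ t in a..b, (μ.m (K.1 ∩ f ⁻¹' (Ici t))).toReal)
      atTop
      (nhds (a * (μ.m V).toReal + ∫ t in a..b, (μ.m (V ∩ f ⁻¹' (Ioi t))).toReal)) := by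
  have hsub : ∀ t, IsOpen (V ∩ f ⁻¹' Ioi t) := fun t => hV.inter (isOpen_Ioi.preimage hf)
  have hsup : ∀ t, IsClosed (f ⁻¹' Ici t) := fun t => isClosed_Ici.preimage hf
  have hfin : ∀ t, μ.m (V ∩ f ⁻¹' Ioi t) ≠ ∞ := fun t =>
    ne_top_of_le_ne_top hVfin.ne (μ.mono_isOpen (hsub t) hV inter_subset_left)
  refine ((μ.tendsto_toReal_isCompact_subset hV hVfin.ne).const_mul a).add
    (tendsto_integral_of_antitone ?_ ?_ ?_ ?_ a b)
  · exact fun s t hst => ENNReal.toReal_mono (hfin s) (μ.mono_isOpen (hsub t) (hsub s)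
      (inter_subset_inter_right V (preimage_mono (Ioi_subset_Ioi hst))))
  · intro K s t hst
    have hK : ∀ t, IsCompact (K.1 ∩ f ⁻¹' Ici t) := fun t => K.2.1.inter_right (hsup t)
    refine ENNReal.toReal_mono ?_ (μ.mono_isCompact (hK t) (hK s)
      (inter_subset_inter_right _ (preimage_mono (Ici_subset_Ici.2 hst))))
    exact ne_top_of_le_ne_top hVfin.ne
      (μ.mono_isCompact_isOpen (hK s) hV (inter_subset_left.trans K.2.2))
  · intro K s t hst
    exact ENNReal.toReal_mono (hfin s) (μ.mono_isCompact_isOpen (K.2.1.inter_right (hsup t))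
      (hsub s) (inter_subset_inter K.2.2 (preimage_mono (Ici_subset_Ioi.2 hst))))
  · exact fun t c hc => μ.eventually_lt_toReal_inter (hsub t) hV (hsup t) inter_subset_left
      (inter_subset_right.trans (preimage_mono Ioi_subset_Ici_self)) hVfin.ne hc

/-- Let `μ` be a deficient topological measure on a locally compact Hausdorff
space, `f` bounded continuous with `f(X) ⊆ [a,b]`, and `V` open with `μ(V) < ∞`. Then the
net of quasi-integrals `∫_K f dμ = aμ(K) + ∫_a^b μ(K ∩ f⁻¹([t,∞))) dt`, indexed by the
compact subsets `K ⊆ V` directed by inclusion, converges to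
`∫_V f dμ = aμ(V) + ∫_a^b μ(V ∩ f⁻¹((t,∞))) dt`. -/
theorem stmt2 {X : Type*} [TopologicalSpace X] [LocallyCompactSpace X] [T2Space X]
    (μ : DeficientTopologicalMeasure X) (f : X → ℝ) (hf : Continuous f)
    (a b : ℝ) (hfab : ∀ x, f x ∈ Icc a b)
    (V : Set X) (hV : IsOpen V) (hVfin : μ.m V < ∞) :
    Tendsto (fun K : {K : Set X // IsCompact K ∧ K ⊆ V} =>
        a * (μ.m K.1).toReal + ∫ t in a..b, (μ.m (K.1 ∩ f ⁻¹' (Ici t))).toReal)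
      atTop
      (nhds (a * (μ.m V).toReal + ∫ t in a..b, (μ.m (V ∩ f ⁻¹' (Ioi t))).toReal)) :=
  stmt2_general μ f hf a b V hV hVfin
end

section
/- Let μ be a deficient topological measure on a locally compact Hausdorff space X, g ∈ C₀⁺(X), and F a compact subset with μ(F) < ∞. Then the net (∫_V g dμ), indexed by the open sets V containing F directed by reverse inclusion, converges to ∫_F g dμ; that is, lim over open V ⊇ F of ∫₀^∞ μ(V ∩ g⁻¹((t,∞))) dt equals ∫₀^∞ μ(F ∩ g⁻¹([t,∞))) dt. -/
/-!
For every open `V ⊇ F` and `0 < s < t` we have `F ∩ {g ≥ t} ⊆ V ∩ {g > s}`; since such a shift of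
the variable is absorbed by rescaling `t ↦ c t` with `c ↑ 1`, this gives `∫_F g dμ ≤ ∫_V g dμ`.
Conversely, outer regularity of `μ` at the compact sets `F ∩ {g ≥ q}` yields, for each rational
`q > 0`, open `V ⊇ F` with `μ(V ∩ {g > q})` close to `μ(F ∩ {g ≥ q})`. A decreasing sequence of
such `V` realises all these countably many infima at once, and monotone convergence (applicable
because `g` is bounded and `μ` is finite on some open `U ⊇ F`) bounds the infimum of the
`∫_V g dμ` by `∫_F g dμ`, again up to a shift in `t`.
-/

open MeasureTheory Set Filter Topology ENNReal

theorem setLIntegral_Ioi_eq_ofReal_mul_comp_mul_left (h : ℝ → ℝ≥0∞) {c : ℝ} (hc : 0 < c) :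
    ∫⁻ t in Ioi (0 : ℝ), h t = ENNReal.ofReal c * ∫⁻ t in Ioi (0 : ℝ), h (c * t) := by
  let e : ℝ ≃ᵐ ℝ := (Homeomorph.mulLeft₀ c hc.ne').toMeasurableEquiv
  have he : ⇑e = (c * ·) := Homeomorph.coe_mulLeft₀ c hc.ne'
  have hpre : (c * ·) ⁻¹' Ioi (0 : ℝ) = Ioi 0 := by
    ext x
    simp [mul_pos_iff_of_pos_left hc]
  have hmap : (volume.restrict (Ioi (0 : ℝ))).map e =
      ENNReal.ofReal c⁻¹ • volume.restrict (Ioi (0 : ℝ)) := by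
    rw [he, ← hpre, ← Measure.restrict_map (measurable_const_mul c) measurableSet_Ioi,
      Real.map_volume_mul_left hc.ne', hpre, Measure.restrict_smul, abs_of_pos (inv_pos.mpr hc)]
  have hsubst : ∫⁻ t in Ioi (0 : ℝ), h (c * t) = ENNReal.ofReal c⁻¹ * ∫⁻ t in Ioi (0 : ℝ), h t := by
    rw [← smul_eq_mul, ← lintegral_smul_measure, ← hmap, lintegral_map_equiv, he]
  rw [hsubst, ← mul_assoc, ← ENNReal.ofReal_mul hc.le, mul_inv_cancel₀ hc.ne', ENNReal.ofReal_one,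
    one_mul]

theorem setLIntegral_Ioi_le_of_le_of_lt {f h : ℝ → ℝ≥0∞}
    (H : ∀ s t : ℝ, 0 < s → s < t → f t ≤ h s) :
    ∫⁻ t in Ioi (0 : ℝ), f t ≤ ∫⁻ t in Ioi (0 : ℝ), h t := by
  refine ENNReal.le_of_forall_lt_one_mul_le fun a ha => ?_
  rcases eq_or_ne a 0 with rfl | ha0
  · simp
  have hc : 0 < a.toReal := ENNReal.toReal_pos ha0 ha.ne_top
  have hc1 : a.toReal < 1 := by simpa using (ENNReal.toReal_lt_toReal ha.ne_top one_ne_top).mpr ha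
  rw [setLIntegral_Ioi_eq_ofReal_mul_comp_mul_left h hc, ENNReal.ofReal_toReal ha.ne_top]
  refine mul_le_mul_right (setLIntegral_mono' measurableSet_Ioi fun t (ht : 0 < t) => ?_) _
  exact H _ t (by positivity) (by nlinarith)

theorem exists_seq_iInf_eq {ι : Type*} [Nonempty ι] (φ : ι → ℝ≥0∞) :
    ∃ u : ℕ → ι, ⨅ n, φ (u n) = ⨅ i, φ i := by
  obtain ⟨a, ha_anti, ha_lim, ha_mem⟩ :=
    exists_seq_tendsto_sInf (range_nonempty φ) (OrderBot.bddBelow _)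
  choose u hu using ha_mem
  refine ⟨u, ?_⟩
  simp only [hu, ← sInf_range]
  exact tendsto_nhds_unique (tendsto_atTop_iInf ha_anti) ha_lim

theorem exists_antitone_seq_le {ι : Type*} [Preorder ι] [IsCodirectedOrder ι] (i₀ : ι)
    (c : ℕ → ι) : ∃ v : ℕ → ι, Antitone v ∧ v 0 = i₀ ∧ ∀ n, v (n + 1) ≤ c n := by
  choose m hm₁ hm₂ using directed_of (α := ι) (· ≥ ·)
  let v : ℕ → ι := fun n => Nat.rec i₀ (fun n w => m w (c n)) n
  exact ⟨v, antitone_nat_of_succ_le fun n => hm₁ _ _, rfl, fun n => hm₂ _ _⟩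

theorem exists_antitone_seq_forall_iInf_eq {ι D : Type*} [Preorder ι] [IsCodirectedOrder ι]
    [Countable D] (φ : D → ι → ℝ≥0∞) (hφ : ∀ d, Monotone (φ d)) (i₀ : ι) :
    ∃ v : ℕ → ι, Antitone v ∧ v 0 = i₀ ∧ ∀ d, ⨅ n, φ d (v n) = ⨅ i, φ d i := by
  have : Nonempty ι := ⟨i₀⟩
  choose u hu using fun d => exists_seq_iInf_eq (φ d)
  cases isEmpty_or_nonempty D
  · exact ⟨fun _ => i₀, antitone_const, rfl, isEmptyElim⟩
  obtain ⟨e, he⟩ := exists_surjective_nat (D × ℕ)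
  obtain ⟨v, hv_anti, hv0, hv_le⟩ := exists_antitone_seq_le i₀ fun n => u (e n).1 (e n).2
  refine ⟨v, hv_anti, hv0, fun d => le_antisymm ?_ (le_iInf fun n => iInf_le _ _)⟩
  rw [← hu d]
  refine le_iInf fun k => ?_
  obtain ⟨n, hn⟩ := he (d, k)
  calc ⨅ m, φ d (v m) ≤ φ d (v (n + 1)) := iInf_le _ _
    _ ≤ φ d (u d k) := hφ d (by simpa only [hn] using hv_le n)

instance {X : Type*} [TopologicalSpace X] {F : Set X} :
    IsCodirectedOrder {V : Set X // IsOpen V ∧ F ⊆ V} :=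
  ⟨fun V W => ⟨⟨V.1 ∩ W.1, V.2.1.inter W.2.1, subset_inter V.2.2 W.2.2⟩,
    inter_subset_left, inter_subset_right⟩⟩

namespace DeficientTopologicalMeasure

variable {X : Type*} [TopologicalSpace X] (μ : DeficientTopologicalMeasure X)

theorem mono_compact_open {K U : Set X} (hK : IsCompact K) (hU : IsOpen U) (h : K ⊆ U) :
    μ.m K ≤ μ.m U := by
  rw [μ.innerRegular hU]
  exact le_iSup₂_of_le K hK (le_iSup_of_le h le_rfl)

theorem mono_open {U W : Set X} (hU : IsOpen U) (hW : IsOpen W) (h : U ⊆ W) :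
    μ.m U ≤ μ.m W := by
  rw [μ.innerRegular hU]
  exact iSup₂_le fun K hK => iSup_le fun hKU => μ.mono_compact_open hK hW (hKU.trans h)

theorem mono_compact [T2Space X] {K C : Set X} (hK : IsCompact K) (hC : IsCompact C)
    (h : K ⊆ C) : μ.m K ≤ μ.m C := by
  rw [μ.outerRegular hC.isClosed]
  exact le_iInf₂ fun U hU => le_iInf fun hCU => μ.mono_compact_open hK hU (h.trans hCU)

theorem exists_isOpen_superset_lt {F : Set X} (hF : IsClosed F) {r : ℝ≥0∞} (h : μ.m F < r) :
    ∃ U, IsOpen U ∧ F ⊆ U ∧ μ.m U < r := by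
  rw [μ.outerRegular hF] at h
  simpa only [iInf_lt_iff, exists_prop] using h

theorem m_empty {U : Set X} (hU : IsOpen U) (h : μ.m U ≠ ∞) : μ.m ∅ = 0 := by
  have hfin : μ.m ∅ ≠ ∞ :=
    ne_top_of_le_ne_top h (μ.mono_compact_open isCompact_empty hU (empty_subset U))
  have hadd := μ.additive isCompact_empty isCompact_empty (disjoint_empty ∅)
  rw [union_empty] at hadd
  exact (ENNReal.add_right_inj hfin).mp (by rw [add_zero]; exact hadd.symm)

variable {g : X → ℝ}

theorem m_inter_preimage_Ioi_mono (hg : Continuous g) {V W : Set X} (hV : IsOpen V)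
    (hW : IsOpen W) (h : V ⊆ W) (t : ℝ) : μ.m (V ∩ g ⁻¹' Ioi t) ≤ μ.m (W ∩ g ⁻¹' Ioi t) :=
  μ.mono_open (hV.inter (isOpen_Ioi.preimage hg)) (hW.inter (isOpen_Ioi.preimage hg))
    (inter_subset_inter_left _ h)

theorem antitone_m_inter_preimage_Ioi (hg : Continuous g) {W : Set X} (hW : IsOpen W) :
    Antitone fun t => μ.m (W ∩ g ⁻¹' Ioi t) := fun _ _ hst =>
  μ.mono_open (hW.inter (isOpen_Ioi.preimage hg)) (hW.inter (isOpen_Ioi.preimage hg))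
    (inter_subset_inter_right _ (preimage_mono (Ioi_subset_Ioi hst)))

theorem antitone_m_inter_preimage_Ici [T2Space X] (hg : Continuous g) {F : Set X}
    (hF : IsCompact F) : Antitone fun t => μ.m (F ∩ g ⁻¹' Ici t) := fun _ _ hst =>
  μ.mono_compact (hF.inter_right (isClosed_Ici.preimage hg))
    (hF.inter_right (isClosed_Ici.preimage hg))
    (inter_subset_inter_right _ (preimage_mono (Ici_subset_Ici.mpr hst)))

theorem lintegral_m_inter_preimage_Ioi_ne_top (hg : Continuous g) {M : ℝ} (hM : ∀ x, g x ≤ M)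
    {W : Set X} (hW : IsOpen W) (hW_fin : μ.m W ≠ ∞) :
    ∫⁻ t in Ioi (0 : ℝ), μ.m (W ∩ g ⁻¹' Ioi t) ≠ ∞ := by
  have hbound : ∀ t ∈ Ioi (0 : ℝ),
      μ.m (W ∩ g ⁻¹' Ioi t) ≤ (Ioc (0 : ℝ) M).indicator (fun _ => μ.m W) t := by
    intro t ht
    by_cases htM : t ≤ M
    · rw [indicator_of_mem (show t ∈ Ioc 0 M from ⟨ht, htM⟩)]
      exact μ.mono_open (hW.inter (isOpen_Ioi.preimage hg)) hW inter_subset_left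
    · have hempty : W ∩ g ⁻¹' Ioi t = ∅ :=
        eq_empty_of_forall_notMem fun x hx => htM ((hM x).trans' (le_of_lt hx.2))
      rw [hempty, μ.m_empty hW hW_fin]
      exact bot_le
  refine ne_top_of_le_ne_top ?_ (setLIntegral_mono' measurableSet_Ioi hbound)
  rw [lintegral_indicator measurableSet_Ioc, setLIntegral_const,
    Measure.restrict_apply measurableSet_Ioc]
  exact ENNReal.mul_ne_top hW_fin
    ((measure_mono inter_subset_left).trans_lt measure_Ioc_lt_top).ne

theorem lintegral_m_inter_preimage_Ici_le (hg : Continuous g) {F V : Set X} (hF : IsCompact F)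
    (hV : IsOpen V) (hFV : F ⊆ V) :
    ∫⁻ t in Ioi (0 : ℝ), μ.m (F ∩ g ⁻¹' Ici t) ≤ ∫⁻ t in Ioi (0 : ℝ), μ.m (V ∩ g ⁻¹' Ioi t) :=
  setLIntegral_Ioi_le_of_le_of_lt fun _ _ _ hst =>
    μ.mono_compact_open (hF.inter_right (isClosed_Ici.preimage hg))
      (hV.inter (isOpen_Ioi.preimage hg))
      fun _ hx => ⟨hFV hx.1, hst.trans_le hx.2⟩

theorem iInf_m_inter_preimage_Ioi_le (hg : Continuous g) {F : Set X} (hF : IsClosed F) (t : ℝ) :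
    ⨅ V : {V : Set X // IsOpen V ∧ F ⊆ V}, μ.m (V.1 ∩ g ⁻¹' Ioi t) ≤ μ.m (F ∩ g ⁻¹' Ici t) := by
  rw [μ.outerRegular (hF.inter (isClosed_Ici.preimage hg))]
  refine le_iInf₂ fun U hU => le_iInf fun hFU => ?_
  have hV : IsOpen (U ∪ g ⁻¹' Iio t) := hU.union (isOpen_Iio.preimage hg)
  have hFV : F ⊆ U ∪ g ⁻¹' Iio t := fun x hx =>
    (lt_or_ge (g x) t).elim Or.inr fun hxt => Or.inl (hFU ⟨hx, hxt⟩)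
  refine iInf_le_of_le ⟨_, hV, hFV⟩ (μ.mono_open (hV.inter (isOpen_Ioi.preimage hg)) hU ?_)
  rintro x ⟨hxU | hxt, hx⟩
  exacts [hxU, (lt_asymm (show t < g x from hx) hxt).elim]

theorem iInf_lintegral_m_inter_preimage_Ioi_le [T2Space X] (hg : Continuous g) {M : ℝ}
    (hM : ∀ x, g x ≤ M) {F U : Set X} (hF : IsCompact F) (hU : IsOpen U) (hFU : F ⊆ U)
    (hU_fin : μ.m U ≠ ∞) :
    ⨅ V : {V : Set X // IsOpen V ∧ F ⊆ V}, ∫⁻ t in Ioi (0 : ℝ), μ.m (V.1 ∩ g ⁻¹' Ioi t) ≤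
      ∫⁻ t in Ioi (0 : ℝ), μ.m (F ∩ g ⁻¹' Ici t) := by
  obtain ⟨v, hv_anti, hv0, hv⟩ := exists_antitone_seq_forall_iInf_eq
    (fun (q : ℚ) (V : {V : Set X // IsOpen V ∧ F ⊆ V}) => μ.m (V.1 ∩ g ⁻¹' Ioi (q : ℝ)))
    (fun q V W hVW => μ.m_inter_preimage_Ioi_mono hg V.2.1 W.2.1 hVW q) ⟨U, hU, hFU⟩
  have hv_fin : ∫⁻ t in Ioi (0 : ℝ), μ.m ((v 0).1 ∩ g ⁻¹' Ioi t) ≠ ∞ := by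
    rw [hv0]
    exact μ.lintegral_m_inter_preimage_Ioi_ne_top hg hM hU hU_fin
  calc ⨅ V : {V : Set X // IsOpen V ∧ F ⊆ V}, ∫⁻ t in Ioi (0 : ℝ), μ.m (V.1 ∩ g ⁻¹' Ioi t)
        ≤ ⨅ n, ∫⁻ t in Ioi (0 : ℝ), μ.m ((v n).1 ∩ g ⁻¹' Ioi t) := le_iInf fun n => iInf_le _ _
    _ = ∫⁻ t in Ioi (0 : ℝ), ⨅ n, μ.m ((v n).1 ∩ g ⁻¹' Ioi t) :=
      (lintegral_iInf (fun n => (μ.antitone_m_inter_preimage_Ioi hg (v n).2.1).measurable)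
        (fun m n hmn => μ.m_inter_preimage_Ioi_mono hg (v n).2.1 (v m).2.1 (hv_anti hmn))
        hv_fin).symm
    _ ≤ _ := setLIntegral_Ioi_le_of_le_of_lt fun s t _ hst => ?_
  obtain ⟨q, hsq, hqt⟩ := exists_rat_btwn hst
  calc ⨅ n, μ.m ((v n).1 ∩ g ⁻¹' Ioi t) ≤ ⨅ n, μ.m ((v n).1 ∩ g ⁻¹' Ioi (q : ℝ)) :=
        iInf_mono fun n => μ.antitone_m_inter_preimage_Ioi hg (v n).2.1 hqt.le
    _ = ⨅ V : {V : Set X // IsOpen V ∧ F ⊆ V}, μ.m (V.1 ∩ g ⁻¹' Ioi (q : ℝ)) := hv q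
    _ ≤ μ.m (F ∩ g ⁻¹' Ici (q : ℝ)) := μ.iInf_m_inter_preimage_Ioi_le hg hF.isClosed q
    _ ≤ μ.m (F ∩ g ⁻¹' Ici s) := μ.antitone_m_inter_preimage_Ici hg hF hsq.le

end DeficientTopologicalMeasure

theorem stmt3_general {X : Type*} [TopologicalSpace X] [T2Space X]
    (μ : DeficientTopologicalMeasure X) (g : X → ℝ) (hg : Continuous g)
    (hginf : Tendsto g (cocompact X) (nhds 0))
    (F : Set X) (hF : IsCompact F) (hFfin : μ.m F < ∞) :
    Tendsto (fun V : {V : Set X // IsOpen V ∧ F ⊆ V} =>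
        ∫⁻ t in Ioi (0 : ℝ), μ.m (V.1 ∩ g ⁻¹' (Ioi t)))
      atBot
      (nhds (∫⁻ t in Ioi (0 : ℝ), μ.m (F ∩ g ⁻¹' (Ici t)))) := by
  set J := fun V : {V : Set X // IsOpen V ∧ F ⊆ V} =>
    ∫⁻ t in Ioi (0 : ℝ), μ.m (V.1 ∩ g ⁻¹' Ioi t)
  have hJ_mono : Monotone J := fun V W hVW =>
    lintegral_mono (μ.m_inter_preimage_Ioi_mono hg V.2.1 W.2.1 hVW)
  suffices ⨅ V, J V = ∫⁻ t in Ioi (0 : ℝ), μ.m (F ∩ g ⁻¹' Ici t) by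
    simpa only [this] using tendsto_atBot_iInf hJ_mono
  refine le_antisymm ?_ (le_iInf fun V => μ.lintegral_m_inter_preimage_Ici_le hg hF V.2.1 V.2.2)
  obtain ⟨M, hM⟩ : BddAbove (range g) :=
    (⟨⟨g, hg⟩, hginf⟩ : ZeroAtInftyContinuousMap X ℝ).isBounded_range.bddAbove
  obtain ⟨U, hU, hFU, hU_fin⟩ := μ.exists_isOpen_superset_lt hF.isClosed hFfin
  exact μ.iInf_lintegral_m_inter_preimage_Ioi_le hg (fun x => hM (mem_range_self x)) hF hU hFU
    hU_fin.ne

/-- Let `μ` be a deficient topological measure on a locally compact Hausdorff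
space, `g ∈ C₀⁺(X)`, and `F` compact with `μ(F) < ∞`. Then the net of quasi-integrals
`∫_V g dμ = ∫₀^∞ μ(V ∩ g⁻¹((t,∞))) dt`, indexed by the open sets `V ⊇ F` directed by
reverse inclusion, converges to `∫_F g dμ = ∫₀^∞ μ(F ∩ g⁻¹([t,∞))) dt`. -/
theorem stmt3 {X : Type*} [TopologicalSpace X] [LocallyCompactSpace X] [T2Space X]
    (μ : DeficientTopologicalMeasure X) (g : X → ℝ) (hg : Continuous g)
    (hg0 : ∀ x, 0 ≤ g x) (hginf : Tendsto g (cocompact X) (nhds 0))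
    (F : Set X) (hF : IsCompact F) (hFfin : μ.m F < ∞) :
    Tendsto (fun V : {V : Set X // IsOpen V ∧ F ⊆ V} =>
        ∫⁻ t in Ioi (0 : ℝ), μ.m (V.1 ∩ g ⁻¹' (Ioi t)))
      atBot
      (nhds (∫⁻ t in Ioi (0 : ℝ), μ.m (F ∩ g ⁻¹' (Ici t)))) :=
  stmt3_general μ g hg hginf F hF hFfin
end

section
/- Let X be a compact Hausdorff space, μ a deficient topological measure on X with μ(X) < ∞, and g a continuous real-valued function on X with g(X) ⊆ [a,b]. For closed F define ν_g(F) = aμ(F) + ∫_a^b μ(F ∩ g⁻¹([t,∞))) dt and for open U define ν_g(U) = aμ(U) + ∫_a^b μ(U ∩ g⁻¹((t,∞))) dt. Then: (1) ν_g(C ⊔ K) = ν_g(C) + ν_g(K) for disjoint closed sets C, K; (2) for every open U, ν_g(U) is the limit of the net (ν_g(K)) over compact K ⊆ U directed by inclusion; (3) for every closed F, ν_g(F) is the limit of the net (ν_g(V)) over open V ⊇ F directed by reverse inclusion; (4) |ν_g(F)| ≤ ‖g‖_∞ · μ(X) for every closed set F. In other words, ν_g is a signed deficient topological measure with norm at most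 ‖g‖_∞ μ(X). -/
open MeasureTheory Set Filter Topology ENNReal

/-- The quasi-integral of `g` over a closed set `F`:
`ν_g(F) = aμ(F) + ∫_a^b μ(F ∩ g⁻¹([t,∞))) dt`. -/
noncomputable def nuClosed {X : Type*} [TopologicalSpace X]
    (μ : DeficientTopologicalMeasure X) (g : X → ℝ) (a b : ℝ) (F : Set X) : ℝ :=
  a * (μ.m F).toReal + ∫ t in a..b, (μ.m (F ∩ g ⁻¹' (Ici t))).toReal

/-- The quasi-integral of `g` over an open set `U`:
`ν_g(U) = aμ(U) + ∫_a^b μ(U ∩ g⁻¹((t,∞))) dt`. -/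
noncomputable def nuOpen {X : Type*} [TopologicalSpace X]
    (μ : DeficientTopologicalMeasure X) (g : X → ℝ) (a b : ℝ) (U : Set X) : ℝ :=
  a * (μ.m U).toReal + ∫ t in a..b, (μ.m (U ∩ g ⁻¹' (Ioi t))).toReal

/-!
The integrands `t ↦ μ(F ∩ {g ≥ t})` (`F` closed) and `t ↦ μ(U ∩ {g > t})` (`U` open) of `ν_g` are
antitone and bounded by `μ(X)`, so shifting the variable by `c` changes their integrals by at most
`2|c|μ(X)`. Additivity follows from additivity of `μ` at each level `t`, and the norm bound from
the closed integrand being `μ(F)` below `min g` and `0` above `max g`.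

For inner regularity at `U`, use inner regularity of `μ` only at the finitely many levels of a
`δ`-net of `[a,b]`: every large enough compact `K ⊆ U` then has
`μ(U ∩ {g > t + δ}) - δ ≤ μ(K ∩ {g ≥ t})` for all `t ∈ [a,b]`, so its integral is within `O(δ)`
of that of `U`; the reverse inequality comes from `μ(K ∩ {g ≥ t}) ≤ μ(U ∩ {g > t - δ})`.
Outer regularity is symmetric, with small open `V ⊇ F`.
-/

theorem abs_integral_comp_add_right_sub_integral_le {ψ : ℝ → ℝ} {M : ℝ}
    (hψ : ∀ x y, IntervalIntegrable ψ volume x y) (hψM : ∀ t, |ψ t| ≤ M) (a b c : ℝ) :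
    |(∫ t in a..b, ψ (t + c)) - ∫ t in a..b, ψ t| ≤ 2 * M * |c| := by
  have hend : ∀ x, |∫ t in x + c..x, ψ t| ≤ M * |c| := fun x => by
    simpa [Real.norm_eq_abs] using
      intervalIntegral.norm_integral_le_of_norm_le_const (a := x + c) (b := x)
        fun t _ => (Real.norm_eq_abs (ψ t)).le.trans (hψM t)
  rw [intervalIntegral.integral_comp_add_right,
    intervalIntegral.integral_interval_sub_interval_comm (hψ _ _) (hψ _ _) (hψ _ _)]
  linarith [abs_sub (∫ t in a + c..a, ψ t) (∫ t in b + c..b, ψ t), hend a, hend b]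

theorem integral_le_integral_add_of_le_comp_add {φ ψ : ℝ → ℝ} {a b c η M : ℝ} (hab : a ≤ b)
    (hφ : IntervalIntegrable φ volume a b) (hψ : ∀ x y, IntervalIntegrable ψ volume x y)
    (hψM : ∀ t, |ψ t| ≤ M) (h : ∀ t ∈ Icc a b, φ t ≤ ψ (t + c) + η) :
    ∫ t in a..b, φ t ≤ (∫ t in a..b, ψ t) + 2 * M * |c| + η * (b - a) := by
  have hψc : IntervalIntegrable (fun t => ψ (t + c)) volume a b := by
    simpa using (hψ (a + c) (b + c)).comp_add_right c
  have hmono := intervalIntegral.integral_mono_on hab hφ (hψc.add intervalIntegrable_const) h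
  rw [intervalIntegral.integral_add hψc intervalIntegrable_const, intervalIntegral.integral_const,
    smul_eq_mul] at hmono
  linarith [(abs_le.1 (abs_integral_comp_add_right_sub_integral_le hψ hψM a b c)).2]

theorem integral_sub_le_integral_of_comp_add_le {φ ψ : ℝ → ℝ} {a b c η M : ℝ} (hab : a ≤ b)
    (hφ : IntervalIntegrable φ volume a b) (hψ : ∀ x y, IntervalIntegrable ψ volume x y)
    (hψM : ∀ t, |ψ t| ≤ M) (h : ∀ t ∈ Icc a b, ψ (t + c) - η ≤ φ t) :
    (∫ t in a..b, ψ t) - 2 * M * |c| - η * (b - a) ≤ ∫ t in a..b, φ t := by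
  have := integral_le_integral_add_of_le_comp_add (φ := -φ) (ψ := -ψ) (c := c) (η := η) hab
    hφ.neg (fun x y => (hψ x y).neg) (fun t => by simpa using hψM t) fun t ht => by
      simp only [Pi.neg_apply]; linarith [h t ht]
  simp only [Pi.neg_apply, intervalIntegral.integral_neg] at this
  linarith

theorem exists_finite_forall_exists_mem_Icc_add (a b c : ℝ) {δ : ℝ} (hδ : 0 < δ) :
    ∃ S : Set ℝ, S.Finite ∧ ∀ t ∈ Icc a b, ∃ s ∈ S, s ∈ Icc (t + c) (t + c + δ) := by
  obtain ⟨T, -, hT, hcover⟩ :=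
    finite_cover_balls_of_compact (isCompact_Icc : IsCompact (Icc a b)) (half_pos hδ)
  refine ⟨(· + (c + δ / 2)) '' T, hT.image _, fun t ht => ?_⟩
  obtain ⟨x, hx, hxt⟩ := mem_iUnion₂.1 (hcover ht)
  rw [Metric.mem_ball, Real.dist_eq, abs_lt] at hxt
  exact ⟨x + (c + δ / 2), mem_image_of_mem _ hx, by constructor <;> linarith [hxt.1, hxt.2]⟩

theorem mul_add_integral_mem_Icc {φ : ℝ → ℝ} {a b p q c : ℝ} (hap : a ≤ p) (hpq : p ≤ q)
    (hqb : q ≤ b) (hφ : IntervalIntegrable φ volume a b) (hc : ∀ t ∈ Icc a p, φ t = c)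
    (hφc : ∀ t ∈ Icc p q, φ t ∈ Icc 0 c) (h0 : ∀ t ∈ Ioc q b, φ t = 0) :
    a * c + ∫ t in a..b, φ t ∈ Icc (p * c) (q * c) := by
  have hint : ∀ {x y}, a ≤ x → x ≤ y → y ≤ b → IntervalIntegrable φ volume x y :=
    fun hax hxy hyb => hφ.mono_set (by
      rw [uIcc_of_le hxy, uIcc_of_le (hax.trans (hxy.trans hyb))]; exact Icc_subset_Icc hax hyb)
  have hleft : ∫ t in a..p, φ t = (p - a) * c := by
    rw [intervalIntegral.integral_congr (g := fun _ => c) fun t ht => hc t (uIcc_of_le hap ▸ ht),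
      intervalIntegral.integral_const, smul_eq_mul]
  have hright : ∫ t in q..b, φ t = 0 := by
    rw [intervalIntegral.integral_congr_ae (g := fun _ => 0)
      (Eventually.of_forall fun t ht => h0 t (uIoc_of_le hqb ▸ ht)), intervalIntegral.integral_zero]
  have hmid_nonneg : 0 ≤ ∫ t in p..q, φ t :=
    intervalIntegral.integral_nonneg hpq fun t ht => (hφc t ht).1
  have hmid_le : ∫ t in p..q, φ t ≤ (q - p) * c := by
    simpa [mul_comm] using intervalIntegral.integral_mono_on hpq (hint hap hpq hqb)
      intervalIntegrable_const fun t ht => (hφc t ht).2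
  rw [← intervalIntegral.integral_add_adjacent_intervals (hint le_rfl hap (hpq.trans hqb))
      (hint hap (hpq.trans hqb) le_rfl),
    ← intervalIntegral.integral_add_adjacent_intervals (hint hap hpq hqb)
      (hint (hap.trans hpq) hqb le_rfl), hleft, hright]
  constructor <;> linarith

namespace DeficientTopologicalMeasure

variable {X : Type*} [TopologicalSpace X] (μ : DeficientTopologicalMeasure X)

theorem mono_compact_closed {K F : Set X} (hK : IsCompact K) (hF : IsClosed F) (h : K ⊆ F) :
    μ.m K ≤ μ.m F := by
  rw [μ.outerRegular hF]
  exact le_iInf₂ fun U hU => le_iInf fun hFU => μ.mono_compact_open hK hU (h.trans hFU)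

theorem mono_open_open {U V : Set X} (hU : IsOpen U) (hV : IsOpen V) (h : U ⊆ V) :
    μ.m U ≤ μ.m V := by
  rw [μ.innerRegular hU]
  exact iSup₂_le fun K hK => iSup_le fun hKU => μ.mono_compact_open hK hV (hKU.trans h)

theorem mono_open_closed {U F : Set X} (hU : IsOpen U) (hF : IsClosed F) (h : U ⊆ F) :
    μ.m U ≤ μ.m F := by
  rw [μ.innerRegular hU]
  exact iSup₂_le fun K hK => iSup_le fun hKU => μ.mono_compact_closed hK hF (hKU.trans h)

theorem m_le_univ_of_isClosed {F : Set X} (hF : IsClosed F) : μ.m F ≤ μ.m univ := by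
  rw [μ.outerRegular hF]
  exact iInf₂_le_of_le univ isOpen_univ (iInf_le _ (subset_univ F))

theorem m_le_univ_of_isOpen {U : Set X} (hU : IsOpen U) : μ.m U ≤ μ.m univ :=
  μ.mono_open_closed hU isClosed_univ (subset_univ U)

theorem m_ne_top_of_isCompact (hμ : μ.m univ ≠ ∞) {K : Set X} (hK : IsCompact K) : μ.m K ≠ ∞ :=
  ne_top_of_le_ne_top hμ (μ.mono_compact_open hK isOpen_univ (subset_univ K))

theorem m_ne_top_of_isClosed (hμ : μ.m univ ≠ ∞) {F : Set X} (hF : IsClosed F) : μ.m F ≠ ∞ :=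
  ne_top_of_le_ne_top hμ (μ.m_le_univ_of_isClosed hF)

theorem m_ne_top_of_isOpen (hμ : μ.m univ ≠ ∞) {U : Set X} (hU : IsOpen U) : μ.m U ≠ ∞ :=
  ne_top_of_le_ne_top hμ (μ.m_le_univ_of_isOpen hU)

theorem m_empty_s5 (hμ : μ.m univ ≠ ∞) : μ.m ∅ = 0 := by
  have h := μ.additive isCompact_empty isCompact_empty (disjoint_empty ∅)
  rw [union_empty] at h
  exact (ENNReal.add_right_inj (μ.m_ne_top_of_isCompact hμ isCompact_empty)).1
    (h.symm.trans (add_zero _).symm)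

theorem toReal_m_union (hμ : μ.m univ ≠ ∞) {C K : Set X} (hC : IsCompact C) (hK : IsCompact K)
    (hCK : Disjoint C K) : (μ.m (C ∪ K)).toReal = (μ.m C).toReal + (μ.m K).toReal := by
  rw [μ.additive hC hK hCK,
    ENNReal.toReal_add (μ.m_ne_top_of_isCompact hμ hC) (μ.m_ne_top_of_isCompact hμ hK)]

theorem exists_isCompact_toReal_sub_lt {U : Set X} (hU : IsOpen U) (hμU : μ.m U ≠ ∞) {η : ℝ}
    (hη : 0 < η) : ∃ K, IsCompact K ∧ K ⊆ U ∧ (μ.m U).toReal - η < (μ.m K).toReal := by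
  by_cases hneg : (μ.m U).toReal - η < 0
  · exact ⟨∅, isCompact_empty, empty_subset U, hneg.trans_le ENNReal.toReal_nonneg⟩
  rw [not_lt] at hneg
  have hlt : ENNReal.ofReal ((μ.m U).toReal - η) < μ.m U :=
    (ENNReal.ofReal_lt_iff_lt_toReal hneg hμU).2 (by linarith)
  obtain ⟨K, hK, hKU, hK'⟩ :
      ∃ K, IsCompact K ∧ K ⊆ U ∧ ENNReal.ofReal ((μ.m U).toReal - η) < μ.m K := by
    simpa only [lt_iSup_iff, exists_prop] using hlt.trans_eq (μ.innerRegular hU)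
  exact ⟨K, hK, hKU, (ENNReal.ofReal_lt_iff_lt_toReal hneg
    (ne_top_of_le_ne_top hμU (μ.mono_compact_open hK hU hKU))).1 hK'⟩

theorem exists_isOpen_toReal_lt_add (hμ : μ.m univ ≠ ∞) {F : Set X} (hF : IsClosed F) {η : ℝ}
    (hη : 0 < η) : ∃ W, IsOpen W ∧ F ⊆ W ∧ (μ.m W).toReal < (μ.m F).toReal + η := by
  have hμF := μ.m_ne_top_of_isClosed hμ hF
  have hlt : μ.m F < μ.m F + ENNReal.ofReal η :=
    ENNReal.lt_add_right hμF (ENNReal.ofReal_pos.2 hη).ne'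
  obtain ⟨W, hW, hFW, hW'⟩ : ∃ W, IsOpen W ∧ F ⊆ W ∧ μ.m W < μ.m F + ENNReal.ofReal η := by
    simpa only [iInf_lt_iff, exists_prop] using (μ.outerRegular hF).symm.trans_lt hlt
  refine ⟨W, hW, hFW, ?_⟩
  have := ENNReal.toReal_strict_mono (by finiteness) hW'
  rwa [ENNReal.toReal_add hμF ENNReal.ofReal_ne_top, ENNReal.toReal_ofReal hη.le] at this

noncomputable def closedDist (g : X → ℝ) (F : Set X) (t : ℝ) : ℝ := (μ.m (F ∩ g ⁻¹' Ici t)).toReal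

noncomputable def openDist (g : X → ℝ) (U : Set X) (t : ℝ) : ℝ := (μ.m (U ∩ g ⁻¹' Ioi t)).toReal

variable {μ} {g : X → ℝ}

theorem antitone_closedDist (hμ : μ.m univ ≠ ∞) (hg : Continuous g) {F : Set X}
    (hFc : IsCompact F) (hF : IsClosed F) : Antitone (μ.closedDist g F) := fun _ _ hst =>
  ENNReal.toReal_mono (μ.m_ne_top_of_isClosed hμ (hF.inter (isClosed_Ici.preimage hg)))
    (μ.mono_compact_closed (hFc.inter_right (isClosed_Ici.preimage hg))
      (hF.inter (isClosed_Ici.preimage hg))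
      (inter_subset_inter_right F (preimage_mono (Ici_subset_Ici.2 hst))))

theorem antitone_openDist (hμ : μ.m univ ≠ ∞) (hg : Continuous g) {U : Set X} (hU : IsOpen U) :
    Antitone (μ.openDist g U) := fun _ _ hst =>
  ENNReal.toReal_mono (μ.m_ne_top_of_isOpen hμ (hU.inter (isOpen_Ioi.preimage hg)))
    (μ.mono_open_open (hU.inter (isOpen_Ioi.preimage hg)) (hU.inter (isOpen_Ioi.preimage hg))
      (inter_subset_inter_right U (preimage_mono (Ioi_subset_Ioi hst))))

theorem abs_closedDist_le (hμ : μ.m univ ≠ ∞) (hg : Continuous g) {F : Set X} (hF : IsClosed F)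
    (t : ℝ) : |μ.closedDist g F t| ≤ (μ.m univ).toReal :=
  (abs_of_nonneg ENNReal.toReal_nonneg).trans_le
    (ENNReal.toReal_mono hμ (μ.m_le_univ_of_isClosed (hF.inter (isClosed_Ici.preimage hg))))

theorem abs_openDist_le (hμ : μ.m univ ≠ ∞) (hg : Continuous g) {U : Set X} (hU : IsOpen U)
    (t : ℝ) : |μ.openDist g U t| ≤ (μ.m univ).toReal :=
  (abs_of_nonneg ENNReal.toReal_nonneg).trans_le
    (ENNReal.toReal_mono hμ (μ.m_le_univ_of_isOpen (hU.inter (isOpen_Ioi.preimage hg))))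

theorem closedDist_le_openDist (hμ : μ.m univ ≠ ∞) (hg : Continuous g) {F V : Set X}
    (hFc : IsCompact F) (hV : IsOpen V) (hFV : F ⊆ V) {s t : ℝ} (hst : s < t) :
    μ.closedDist g F t ≤ μ.openDist g V s :=
  ENNReal.toReal_mono (μ.m_ne_top_of_isOpen hμ (hV.inter (isOpen_Ioi.preimage hg)))
    (μ.mono_compact_open (hFc.inter_right (isClosed_Ici.preimage hg))
      (hV.inter (isOpen_Ioi.preimage hg))
      (inter_subset_inter hFV fun _ hx => hst.trans_le hx))

theorem integral_closedDist_le_integral_openDist (hμ : μ.m univ ≠ ∞) (hg : Continuous g)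
    {F V : Set X} (hFc : IsCompact F) (hF : IsClosed F) (hV : IsOpen V) (hFV : F ⊆ V) {a b : ℝ}
    (hab : a ≤ b) : ∫ t in a..b, μ.closedDist g F t ≤ ∫ t in a..b, μ.openDist g V t := by
  refine le_of_forall_pos_le_add fun ε hε => ?_
  obtain ⟨δ, hδ, hδε⟩ := exists_pos_mul_lt hε (2 * (μ.m univ).toReal)
  have := integral_le_integral_add_of_le_comp_add (c := -δ) (η := 0) hab
    (antitone_closedDist hμ hg hFc hF).intervalIntegrable
    (fun _ _ => (antitone_openDist hμ hg hV).intervalIntegrable) (abs_openDist_le hμ hg hV)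
    fun t _ => by
      rw [← sub_eq_add_neg, add_zero]
      exact closedDist_le_openDist hμ hg hFc hV hFV (sub_lt_self t hδ)
  rw [abs_neg, abs_of_pos hδ] at this
  linarith

theorem tendsto_toReal_m_atTop [T2Space X] (hμ : μ.m univ ≠ ∞) {U : Set X} (hU : IsOpen U) :
    Tendsto (fun K : {K : Set X // IsCompact K ∧ K ⊆ U} => (μ.m K).toReal) atTop
      (𝓝 (μ.m U).toReal) := by
  have hmono : Monotone fun K : {K : Set X // IsCompact K ∧ K ⊆ U} => μ.m K :=
    fun K L hKL => μ.mono_compact_closed K.2.1 L.2.1.isClosed hKL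
  have hsup : ⨆ K : {K : Set X // IsCompact K ∧ K ⊆ U}, μ.m K = μ.m U := by
    simp only [μ.innerRegular hU, iSup_subtype, iSup_and]
  exact (ENNReal.tendsto_toReal (μ.m_ne_top_of_isOpen hμ hU)).comp
    (hsup ▸ tendsto_atTop_iSup hmono)

theorem tendsto_toReal_m_atBot (hμ : μ.m univ ≠ ∞) {F : Set X} (hF : IsClosed F) :
    Tendsto (fun V : {V : Set X // IsOpen V ∧ F ⊆ V} => (μ.m V).toReal) atBot
      (𝓝 (μ.m F).toReal) := by
  have hmono : Monotone fun V : {V : Set X // IsOpen V ∧ F ⊆ V} => μ.m V :=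
    fun V W hVW => μ.mono_open_open V.2.1 W.2.1 hVW
  have hinf : ⨅ V : {V : Set X // IsOpen V ∧ F ⊆ V}, μ.m V = μ.m F := by
    simp only [μ.outerRegular hF, iInf_subtype, iInf_and]
  exact (ENNReal.tendsto_toReal (μ.m_ne_top_of_isClosed hμ hF)).comp
    (hinf ▸ tendsto_atBot_iInf hmono)

theorem eventually_openDist_sub_le_closedDist [T2Space X] (hμ : μ.m univ ≠ ∞) (hg : Continuous g)
    {U : Set X} (hU : IsOpen U) (s : ℝ) {η : ℝ} (hη : 0 < η) :
    ∀ᶠ K : {K : Set X // IsCompact K ∧ K ⊆ U} in atTop,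
      ∀ t ≤ s, μ.openDist g U s - η ≤ μ.closedDist g K t := by
  have hUs : IsOpen (U ∩ g ⁻¹' Ioi s) := hU.inter (isOpen_Ioi.preimage hg)
  obtain ⟨C, hC, hCU, hCs⟩ :=
    μ.exists_isCompact_toReal_sub_lt hUs (μ.m_ne_top_of_isOpen hμ hUs) hη
  filter_upwards [Ici_mem_atTop ⟨C, hC, hCU.trans inter_subset_left⟩] with K hCK t hts
  have hKt : IsClosed (K.1 ∩ g ⁻¹' Ici t) := K.2.1.isClosed.inter (isClosed_Ici.preimage hg)
  exact hCs.le.trans (ENNReal.toReal_mono (μ.m_ne_top_of_isClosed hμ hKt)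
    (μ.mono_compact_closed hC hKt fun x hx => ⟨hCK hx, hts.trans (hCU hx).2.le⟩))

theorem eventually_openDist_le_closedDist_add (hμ : μ.m univ ≠ ∞) (hg : Continuous g)
    {F : Set X} (hF : IsClosed F) (s : ℝ) {η : ℝ} (hη : 0 < η) :
    ∀ᶠ V : {V : Set X // IsOpen V ∧ F ⊆ V} in atBot,
      ∀ t ≥ s, μ.openDist g V t ≤ μ.closedDist g F s + η := by
  obtain ⟨W, hW, hFW, hWs⟩ := μ.exists_isOpen_toReal_lt_add hμ
    (hF.inter (isClosed_Ici.preimage hg)) hη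
  have hF' : F ⊆ W ∪ g ⁻¹' Iio s := fun x hx => (le_or_gt s (g x)).imp (fun h => hFW ⟨hx, h⟩) id
  filter_upwards [Iic_mem_atBot ⟨_, hW.union (isOpen_Iio.preimage hg), hF'⟩] with V hVW t hst
  have hVt : V.1 ∩ g ⁻¹' Ioi t ⊆ W := fun x hx =>
    (hVW hx.1).resolve_right (not_lt.2 (hst.trans (le_of_lt hx.2)))
  exact (ENNReal.toReal_mono (μ.m_ne_top_of_isOpen hμ hW)
    (μ.mono_open_open (V.2.1.inter (isOpen_Ioi.preimage hg)) hW hVt)).trans hWs.le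

theorem eventually_integral_openDist_sub_le_integral_closedDist [T2Space X]
    (hμ : μ.m univ ≠ ∞) (hg : Continuous g) {U : Set X} (hU : IsOpen U) {a b δ : ℝ}
    (hab : a ≤ b) (hδ : 0 < δ) :
    ∀ᶠ K : {K : Set X // IsCompact K ∧ K ⊆ U} in atTop,
      (∫ t in a..b, μ.openDist g U t) - (2 * (μ.m univ).toReal + (b - a)) * δ ≤
        ∫ t in a..b, μ.closedDist g K t := by
  obtain ⟨S, hS, hnet⟩ := exists_finite_forall_exists_mem_Icc_add a b 0 hδ
  filter_upwards [(hS.eventually_all).2 fun s _ =>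
    eventually_openDist_sub_le_closedDist hμ hg hU s hδ] with K hK
  have key := integral_sub_le_integral_of_comp_add_le (c := δ) (η := δ) hab
    (antitone_closedDist hμ hg K.2.1 K.2.1.isClosed).intervalIntegrable
    (fun _ _ => (antitone_openDist hμ hg hU).intervalIntegrable) (abs_openDist_le hμ hg hU)
    fun t ht => by
      obtain ⟨s, hs, hts, hst⟩ := hnet t ht
      rw [add_zero] at hts hst
      linarith [hK s hs t hts, antitone_openDist hμ hg hU hst]
  rw [abs_of_pos hδ] at key
  linarith

theorem eventually_integral_openDist_le_integral_closedDist_add (hμ : μ.m univ ≠ ∞)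
    (hg : Continuous g) {F : Set X} (hFc : IsCompact F) (hF : IsClosed F) {a b δ : ℝ}
    (hab : a ≤ b) (hδ : 0 < δ) :
    ∀ᶠ V : {V : Set X // IsOpen V ∧ F ⊆ V} in atBot,
      ∫ t in a..b, μ.openDist g V t ≤
        (∫ t in a..b, μ.closedDist g F t) + (2 * (μ.m univ).toReal + (b - a)) * δ := by
  obtain ⟨S, hS, hnet⟩ := exists_finite_forall_exists_mem_Icc_add a b (-δ) hδ
  filter_upwards [(hS.eventually_all).2 fun s _ =>
    eventually_openDist_le_closedDist_add hμ hg hF s hδ] with V hV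
  have key := integral_le_integral_add_of_le_comp_add (c := -δ) (η := δ) hab
    (antitone_openDist hμ hg V.2.1).intervalIntegrable
    (fun _ _ => (antitone_closedDist hμ hg hFc hF).intervalIntegrable)
    (abs_closedDist_le hμ hg hF) fun t ht => by
      obtain ⟨s, hs, hts, hst⟩ := hnet t ht
      rw [neg_add_cancel_right] at hst
      linarith [hV s hs t hst, antitone_closedDist hμ hg hFc hF hts]
  rw [abs_neg, abs_of_pos hδ] at key
  linarith

theorem tendsto_integral_closedDist_atTop [T2Space X] (hμ : μ.m univ ≠ ∞) (hg : Continuous g)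
    {U : Set X} (hU : IsOpen U) (a b : ℝ) :
    Tendsto (fun K : {K : Set X // IsCompact K ∧ K ⊆ U} => ∫ t in a..b, μ.closedDist g K t)
      atTop (𝓝 (∫ t in a..b, μ.openDist g U t)) := by
  wlog hab : a ≤ b generalizing a b
  · simpa only [intervalIntegral.integral_symm a b, neg_neg] using (this b a (le_of_not_ge hab)).neg
  refine tendsto_order.2 ⟨fun l hl => ?_, fun u hu => Eventually.of_forall fun K =>
    (integral_closedDist_le_integral_openDist hμ hg K.2.1 K.2.1.isClosed hU K.2.2 hab).trans_lt hu⟩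
  obtain ⟨δ, hδ, hδl⟩ := exists_pos_mul_lt (sub_pos.2 hl) (2 * (μ.m univ).toReal + (b - a))
  filter_upwards [eventually_integral_openDist_sub_le_integral_closedDist hμ hg hU hab hδ] with K hK
  linarith

theorem tendsto_integral_openDist_atBot (hμ : μ.m univ ≠ ∞) (hg : Continuous g) {F : Set X}
    (hFc : IsCompact F) (hF : IsClosed F) (a b : ℝ) :
    Tendsto (fun V : {V : Set X // IsOpen V ∧ F ⊆ V} => ∫ t in a..b, μ.openDist g V t)
      atBot (𝓝 (∫ t in a..b, μ.closedDist g F t)) := by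
  wlog hab : a ≤ b generalizing a b
  · simpa only [intervalIntegral.integral_symm a b, neg_neg] using (this b a (le_of_not_ge hab)).neg
  refine tendsto_order.2 ⟨fun l hl => Eventually.of_forall fun V =>
    hl.trans_le (integral_closedDist_le_integral_openDist hμ hg hFc hF V.2.1 V.2.2 hab),
    fun u hu => ?_⟩
  obtain ⟨δ, hδ, hδu⟩ := exists_pos_mul_lt (sub_pos.2 hu) (2 * (μ.m univ).toReal + (b - a))
  filter_upwards [eventually_integral_openDist_le_integral_closedDist_add hμ hg hFc hF hab hδ]
    with V hV
  linarith

theorem closedDist_of_forall_le {F : Set X} {t : ℝ} (h : ∀ x ∈ F, t ≤ g x) :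
    μ.closedDist g F t = (μ.m F).toReal := by
  have hF : F ∩ g ⁻¹' Ici t = F := inter_eq_left.2 h
  rw [closedDist, hF]

theorem closedDist_of_forall_lt (hμ : μ.m univ ≠ ∞) {F : Set X} {t : ℝ} (h : ∀ x ∈ F, g x < t) :
    μ.closedDist g F t = 0 := by
  have hempty : F ∩ g ⁻¹' Ici t = ∅ :=
    eq_empty_of_forall_notMem fun x hx => not_le.2 (h x hx.1) hx.2
  rw [closedDist, hempty, μ.m_empty_s5 hμ, ENNReal.toReal_zero]

theorem nuClosed_eq (a b : ℝ) (F : Set X) :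
    nuClosed μ g a b F = a * (μ.m F).toReal + ∫ t in a..b, μ.closedDist g F t := rfl

theorem nuClosed_union (hμ : μ.m univ ≠ ∞) (hg : Continuous g) {C K : Set X} (hCc : IsCompact C)
    (hC : IsClosed C) (hKc : IsCompact K) (hK : IsClosed K) (hCK : Disjoint C K) (a b : ℝ) :
    nuClosed μ g a b (C ∪ K) = nuClosed μ g a b C + nuClosed μ g a b K := by
  have hdist : ∀ t, μ.closedDist g (C ∪ K) t = μ.closedDist g C t + μ.closedDist g K t :=
    fun t => by
      rw [closedDist, union_inter_distrib_right]
      exact μ.toReal_m_union hμ (hCc.inter_right (isClosed_Ici.preimage hg))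
        (hKc.inter_right (isClosed_Ici.preimage hg)) (hCK.mono inter_subset_left inter_subset_left)
  simp only [nuClosed_eq, hdist]
  rw [intervalIntegral.integral_add
      (antitone_closedDist hμ hg hCc hC).intervalIntegrable
      (antitone_closedDist hμ hg hKc hK).intervalIntegrable, μ.toReal_m_union hμ hCc hKc hCK]
  ring

theorem tendsto_nuClosed_atTop [T2Space X] (hμ : μ.m univ ≠ ∞) (hg : Continuous g) {U : Set X}
    (hU : IsOpen U) (a b : ℝ) :
    Tendsto (fun K : {K : Set X // IsCompact K ∧ K ⊆ U} => nuClosed μ g a b K.1) atTop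
      (𝓝 (nuOpen μ g a b U)) :=
  ((tendsto_toReal_m_atTop hμ hU).const_mul a).add
    (tendsto_integral_closedDist_atTop hμ hg hU a b)

theorem tendsto_nuOpen_atBot (hμ : μ.m univ ≠ ∞) (hg : Continuous g) {F : Set X}
    (hFc : IsCompact F) (hF : IsClosed F) (a b : ℝ) :
    Tendsto (fun V : {V : Set X // IsOpen V ∧ F ⊆ V} => nuOpen μ g a b V.1) atBot
      (𝓝 (nuClosed μ g a b F)) :=
  ((tendsto_toReal_m_atBot hμ hF).const_mul a).add
    (tendsto_integral_openDist_atBot hμ hg hFc hF a b)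

theorem abs_nuClosed_le (hμ : μ.m univ ≠ ∞) (hg : Continuous g) {a b : ℝ}
    (hgab : ∀ x, g x ∈ Icc a b) {F : Set X} (hFc : IsCompact F) (hF : IsClosed F) :
    |nuClosed μ g a b F| ≤ (⨆ x, |g x|) * (μ.m univ).toReal := by
  set S := ⨆ x, |g x|
  have hS : ∀ x, |g x| ≤ S := le_ciSup ⟨max |a| |b|, by
    rintro _ ⟨x, rfl⟩
    exact abs_le_max_abs_abs (hgab x).1 (hgab x).2⟩
  have hS0 : 0 ≤ S := Real.iSup_nonneg fun x => abs_nonneg (g x)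
  rcases F.eq_empty_or_nonempty with rfl | ⟨x, hx⟩
  · simp [nuClosed, μ.m_empty_s5 hμ]
    positivity
  have hlow : ∀ y, max a (-S) ≤ g y := fun y => max_le (hgab y).1 (neg_le_of_abs_le (hS y))
  have hupp : ∀ y, g y ≤ min b S := fun y => le_min (hgab y).2 ((le_abs_self _).trans (hS y))
  obtain ⟨hge, hle⟩ := mul_add_integral_mem_Icc (le_max_left a (-S)) ((hlow x).trans (hupp x))
    (min_le_left b S) (antitone_closedDist hμ hg hFc hF).intervalIntegrable
    (fun t ht => closedDist_of_forall_le fun y _ => ht.2.trans (hlow y))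
    (fun t _ => ⟨ENNReal.toReal_nonneg, ENNReal.toReal_mono (μ.m_ne_top_of_isClosed hμ hF)
      (μ.mono_compact_closed (hFc.inter_right (isClosed_Ici.preimage hg)) hF inter_subset_left)⟩)
    (fun t ht => closedDist_of_forall_lt hμ fun y _ => (hupp y).trans_lt ht.1)
  have hmF : (μ.m F).toReal ≤ (μ.m univ).toReal :=
    ENNReal.toReal_mono hμ (μ.m_le_univ_of_isClosed hF)
  have hmF0 : 0 ≤ (μ.m F).toReal := ENNReal.toReal_nonneg
  rw [nuClosed_eq, abs_le]
  constructor
  · nlinarith [mul_le_mul_of_nonneg_right (le_max_right a (-S)) hmF0]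
  · nlinarith [mul_le_mul_of_nonneg_right (min_le_right b S) hmF0]

end DeficientTopologicalMeasure

/-- On a compact Hausdorff space with `μ(X) < ∞` and `g` continuous with
`g(X) ⊆ [a,b]`, the set function `ν_g` is a signed deficient topological measure with norm
at most `‖g‖_∞ μ(X)`: it is additive on disjoint closed sets, inner regular (as a net limit)
on open sets, outer regular (as a net limit) on closed sets, and `|ν_g(F)| ≤ ‖g‖_∞ μ(X)`. -/
theorem stmt5 {X : Type*} [TopologicalSpace X] [CompactSpace X] [T2Space X]
    (μ : DeficientTopologicalMeasure X) (hμfin : μ.m univ < ∞)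
    (g : X → ℝ) (hg : Continuous g) (a b : ℝ) (hgab : ∀ x, g x ∈ Icc a b) :
    (∀ C K : Set X, IsClosed C → IsClosed K → Disjoint C K →
        nuClosed μ g a b (C ∪ K) = nuClosed μ g a b C + nuClosed μ g a b K) ∧
    (∀ U : Set X, IsOpen U →
        Tendsto (fun K : {K : Set X // IsCompact K ∧ K ⊆ U} => nuClosed μ g a b K.1)
          atTop (nhds (nuOpen μ g a b U))) ∧
    (∀ F : Set X, IsClosed F →
        Tendsto (fun V : {V : Set X // IsOpen V ∧ F ⊆ V} => nuOpen μ g a b V.1)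
          atBot (nhds (nuClosed μ g a b F))) ∧
    (∀ F : Set X, IsClosed F →
        |nuClosed μ g a b F| ≤ (⨆ x, |g x|) * (μ.m univ).toReal) :=
  ⟨fun _ _ hC hK hCK => DeficientTopologicalMeasure.nuClosed_union hμfin.ne hg hC.isCompact hC
      hK.isCompact hK hCK a b,
    fun _ hU => DeficientTopologicalMeasure.tendsto_nuClosed_atTop hμfin.ne hg hU a b,
    fun _ hF => DeficientTopologicalMeasure.tendsto_nuOpen_atBot hμfin.ne hg hF.isCompact hF a b,
    fun _ hF => DeficientTopologicalMeasure.abs_nuClosed_le hμfin.ne hg hgab hF.isCompact hF⟩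
end

section
/- Let μ be a compact-finite deficient topological measure on a locally compact Hausdorff space X, K a compact set, and f, g continuous nonnegative compactly supported functions on X with supp f ⊆ K and supp g ⊆ K. Then |∫_K g dμ − ∫_K f dμ| ≤ ‖f − g‖_∞ · μ(K). -/
open MeasureTheory Set Filter Topology ENNReal

/-!
If `g ≤ f + c` on `K`, then for `t > c` the superlevel set `K ∩ {g ≥ t}` lies in
`K ∩ {f ≥ t - c}`, while for `t ≤ c` it has measure at most `μ K`. Splitting the quasi-integral
at `c` therefore gives `∫_K g dμ ≤ ∫_K f dμ + c μ(K)`. Applying this with `c = ‖f - g‖_∞`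
in both directions yields the Lipschitz estimate, once both quasi-integrals are known to be
finite; finiteness is the case `f = 0`, `c = max_K g`.
-/

lemma abs_toReal_sub_toReal_le_of_le_add {a b e : ℝ≥0∞} (ha : a ≠ ∞) (hb : b ≠ ∞) (he : e ≠ ∞)
    (hab : a ≤ b + e) (hba : b ≤ a + e) : |a.toReal - b.toReal| ≤ e.toReal := by
  have hab' := (toReal_le_toReal ha (add_ne_top.2 ⟨hb, he⟩)).2 hab
  have hba' := (toReal_le_toReal hb (add_ne_top.2 ⟨ha, he⟩)).2 hba
  rw [toReal_add hb he] at hab'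
  rw [toReal_add ha he] at hba'
  exact abs_sub_le_iff.2 ⟨by linarith, by linarith⟩

lemma setLIntegral_Ioi_comp_sub_right (φ : ℝ → ℝ≥0∞) (c : ℝ) :
    ∫⁻ t in Ioi c, φ (t - c) = ∫⁻ s in Ioi 0, φ s := by
  have := (measurePreserving_sub_right volume c).setLIntegral_comp_preimage_emb
    (MeasurableEquiv.subRight c).measurableEmbedding φ (Ioi 0)
  rwa [preimage_sub_const_Ioi, zero_add] at this

namespace DeficientTopologicalMeasure

variable {X : Type*} [TopologicalSpace X] (μ : DeficientTopologicalMeasure X)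

noncomputable def quasiIntegral (K : Set X) (f : X → ℝ) : ℝ≥0∞ :=
  ∫⁻ t in Ioi 0, μ.m (K ∩ f ⁻¹' Ici t)

lemma m_mono {C F : Set X} (hC : IsCompact C) (hF : IsClosed F) (h : C ⊆ F) :
    μ.m C ≤ μ.m F := by
  rw [μ.outerRegular hF]
  refine le_iInf₂ fun U hU => le_iInf fun hFU => ?_
  rw [μ.innerRegular hU]
  exact le_iSup₂_of_le C hC (le_iSup_of_le (h.trans hFU) le_rfl)

lemma m_empty_s8 (h : μ.m ∅ ≠ ∞) : μ.m ∅ = 0 := by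
  have hadd := μ.additive isCompact_empty isCompact_empty disjoint_bot_left
  rw [union_empty] at hadd
  exact (ENNReal.add_right_inj h).1 (hadd.symm.trans (add_zero _).symm)

lemma quasiIntegral_zero (K : Set X) (hμ : μ.m ∅ ≠ ∞) : μ.quasiIntegral K 0 = 0 := by
  refine (setLIntegral_congr_fun measurableSet_Ioi fun t (ht : 0 < t) => ?_).trans
    lintegral_zero
  have : K ∩ (0 : X → ℝ) ⁻¹' Ici t = ∅ :=
    eq_empty_of_forall_notMem fun x hx => ht.not_ge hx.2
  rw [this, μ.m_empty_s8 hμ]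

variable [T2Space X] {K : Set X}

lemma m_inter_superlevel_le (hK : IsCompact K) {f : X → ℝ} (hf : Continuous f) (t : ℝ) :
    μ.m (K ∩ f ⁻¹' Ici t) ≤ μ.m K :=
  μ.m_mono (hK.inter_right (isClosed_Ici.preimage hf)) hK.isClosed inter_subset_left

lemma quasiIntegral_le_add (hK : IsCompact K) {f g : X → ℝ} (hf : Continuous f)
    (hg : Continuous g) {c : ℝ} (hc : 0 ≤ c) (hfg : ∀ x ∈ K, g x ≤ f x + c) :
    μ.quasiIntegral K g ≤ μ.quasiIntegral K f + ENNReal.ofReal c * μ.m K := by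
  have low : ∫⁻ t in Ioc 0 c, μ.m (K ∩ g ⁻¹' Ici t) ≤ ENNReal.ofReal c * μ.m K :=
    calc ∫⁻ t in Ioc 0 c, μ.m (K ∩ g ⁻¹' Ici t)
        ≤ ∫⁻ _ in Ioc 0 c, μ.m K := lintegral_mono (μ.m_inter_superlevel_le hK hg)
      _ = ENNReal.ofReal c * μ.m K := by
          rw [setLIntegral_const, Real.volume_Ioc, sub_zero, mul_comm]
  have high : ∫⁻ t in Ioi c, μ.m (K ∩ g ⁻¹' Ici t) ≤ μ.quasiIntegral K f := by
    rw [quasiIntegral, ← setLIntegral_Ioi_comp_sub_right (fun s => μ.m (K ∩ f ⁻¹' Ici s))]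
    refine lintegral_mono fun t => μ.m_mono (hK.inter_right (isClosed_Ici.preimage hg))
      (hK.isClosed.inter (isClosed_Ici.preimage hf)) fun x ⟨hxK, hxt⟩ => ⟨hxK, ?_⟩
    have := hfg x hxK
    simp only [mem_preimage, mem_Ici] at hxt ⊢
    linarith
  calc μ.quasiIntegral K g
      = (∫⁻ t in Ioc 0 c, μ.m (K ∩ g ⁻¹' Ici t)) + ∫⁻ t in Ioi c, μ.m (K ∩ g ⁻¹' Ici t) := by
        rw [quasiIntegral, ← Ioc_union_Ioi_eq_Ioi hc,
          lintegral_union measurableSet_Ioi (Ioc_disjoint_Ioi le_rfl)]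
    _ ≤ ENNReal.ofReal c * μ.m K + μ.quasiIntegral K f := add_le_add low high
    _ = μ.quasiIntegral K f + ENNReal.ofReal c * μ.m K := add_comm _ _

lemma quasiIntegral_ne_top (hK : IsCompact K) (hμK : μ.m K ≠ ∞) {f : X → ℝ}
    (hf : Continuous f) : μ.quasiIntegral K f ≠ ∞ := by
  obtain ⟨B, hB⟩ := hK.bddAbove_image hf.continuousOn
  have hμ₀ : μ.m ∅ ≠ ∞ := ne_top_of_le_ne_top hμK (μ.m_mono isCompact_empty hK.isClosed
    (empty_subset K))
  have := μ.quasiIntegral_le_add hK continuous_zero hf (le_max_right B 0) fun x hx => by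
    rw [Pi.zero_apply, zero_add]
    exact (hB (mem_image_of_mem f hx)).trans (le_max_left B 0)
  rw [quasiIntegral_zero μ K hμ₀, zero_add] at this
  exact ne_top_of_le_ne_top (mul_ne_top ofReal_ne_top hμK) this

end DeficientTopologicalMeasure

theorem stmt8_general {X : Type*} [TopologicalSpace X] [T2Space X]
    (μ : DeficientTopologicalMeasure X)
    (hcf : ∀ K : Set X, IsCompact K → μ.m K < ∞)
    (K : Set X) (hK : IsCompact K)
    (f g : X → ℝ) (hf : Continuous f) (hg : Continuous g)
    (hfc : HasCompactSupport f) (hgc : HasCompactSupport g) :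
    |(∫⁻ t in Ioi (0 : ℝ), μ.m (K ∩ g ⁻¹' (Ici t))).toReal -
        (∫⁻ t in Ioi (0 : ℝ), μ.m (K ∩ f ⁻¹' (Ici t))).toReal| ≤
      (⨆ x, |f x - g x|) * (μ.m K).toReal := by
  have hμK := (hcf K hK).ne
  obtain ⟨C, hC⟩ := (hf.sub hg).bounded_above_of_compact_support (hfc.sub hgc)
  have hbdd : BddAbove (range fun x => |f x - g x|) := ⟨C, forall_mem_range.2 hC⟩
  have hdist (x : X) : |f x - g x| ≤ ⨆ x, |f x - g x| := le_ciSup hbdd x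
  have hc : 0 ≤ ⨆ x, |f x - g x| := Real.iSup_nonneg fun x => abs_nonneg _
  have hgf := μ.quasiIntegral_le_add hK hf hg hc fun x _ => by
    linarith [(abs_le.1 (hdist x)).1]
  have hfg := μ.quasiIntegral_le_add hK hg hf hc fun x _ => by
    linarith [(abs_le.1 (hdist x)).2]
  have := abs_toReal_sub_toReal_le_of_le_add (μ.quasiIntegral_ne_top hK hμK hg)
    (μ.quasiIntegral_ne_top hK hμK hf) (mul_ne_top ofReal_ne_top hμK) hgf hfg
  rwa [toReal_mul, toReal_ofReal hc] at this

/-- Lipschitz continuity. Let `μ` be a compact-finite deficient topological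
measure on a locally compact Hausdorff space, `K` compact, `f, g` continuous nonnegative
with compact supports contained in `K`. Then `|∫_K g dμ − ∫_K f dμ| ≤ ‖f − g‖_∞ μ(K)`,
where `∫_K h dμ = ∫₀^∞ μ(K ∩ h⁻¹([t,∞))) dt`. -/
theorem stmt8 {X : Type*} [TopologicalSpace X] [LocallyCompactSpace X] [T2Space X]
    (μ : DeficientTopologicalMeasure X)
    (hcf : ∀ K : Set X, IsCompact K → μ.m K < ∞)
    (K : Set X) (hK : IsCompact K)
    (f g : X → ℝ) (hf : Continuous f) (hg : Continuous g)
    (hf0 : ∀ x, 0 ≤ f x) (hg0 : ∀ x, 0 ≤ g x)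
    (hfc : HasCompactSupport f) (hgc : HasCompactSupport g)
    (hfK : tsupport f ⊆ K) (hgK : tsupport g ⊆ K) :
    |(∫⁻ t in Ioi (0 : ℝ), μ.m (K ∩ g ⁻¹' (Ici t))).toReal -
        (∫⁻ t in Ioi (0 : ℝ), μ.m (K ∩ f ⁻¹' (Ici t))).toReal| ≤
      (⨆ x, |f x - g x|) * (μ.m K).toReal :=
  stmt8_general μ hcf K hK f g hf hg hfc hgc
end

section
/- Let μ be a compact-finite topological measure on a locally compact Hausdorff space X, g ∈ C₀⁺(X), and A, B disjoint nonempty sets such that each of A, B and A ⊔ B is either open or compact, and μ(A ⊔ B) < ∞. Then ∫_{A⊔B} g dμ ≤ ∫_A g dμ + ∫_B g dμ + μ(A⊔B) · max{ω(g,A), ω(g,B)}, where ω(g,E) = sup_{x∈E} g(x) − inf_{x∈E} g(x). -/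
open MeasureTheory Set Filter Topology ENNReal

/-- A topological measure on a topological space `X`: a set function with values in `[0,∞]`
(recorded on all sets, but constrained only on open and closed sets) that is additive on
disjoint sets `A, B` such that each of `A`, `B`, `A ⊔ B` is open or compact, inner regular
on open sets with respect to compact sets, and outer regular on closed sets. -/
structure TopologicalMeasure (X : Type*) [TopologicalSpace X] where
  m : Set X → ℝ≥0∞
  additive : ∀ ⦃A B : Set X⦄, (IsOpen A ∨ IsCompact A) → (IsOpen B ∨ IsCompact B) →
    (IsOpen (A ∪ B) ∨ IsCompact (A ∪ B)) → Disjoint A B → m (A ∪ B) = m A + m B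
  innerRegular : ∀ ⦃U : Set X⦄, IsOpen U →
    m U = ⨆ (K : Set X) (_ : IsCompact K) (_ : K ⊆ U), m K
  outerRegular : ∀ ⦃F : Set X⦄, IsClosed F →
    m F = ⨅ (U : Set X) (_ : IsOpen U) (_ : F ⊆ U), m U

open Classical in
/-- The quasi-integral of a nonnegative function `g` over a set `E` which is compact or
open: `∫_E g dμ = ∫₀^∞ μ(E ∩ g⁻¹([t,∞))) dt` when `E` is compact, and
`∫_E g dμ = ∫₀^∞ μ(E ∩ g⁻¹((t,∞))) dt` when `E` is open (the two formulas agree when `E`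
is both compact and open). -/
noncomputable def qint {X : Type*} [TopologicalSpace X]
    (μ : TopologicalMeasure X) (g : X → ℝ) (E : Set X) : ℝ≥0∞ :=
  if IsCompact E then ∫⁻ t in Ioi (0 : ℝ), μ.m (E ∩ g ⁻¹' (Ici t))
  else ∫⁻ t in Ioi (0 : ℝ), μ.m (E ∩ g ⁻¹' (Ioi t))

section aux
variable {X : Type*} [TopologicalSpace X] [T2Space X] (μ : TopologicalMeasure X)

lemma tm_mono_ko {K U : Set X} (hK : IsCompact K) (hU : IsOpen U) (hKU : K ⊆ U) :
    μ.m K ≤ μ.m U := by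
  have h : K ∪ (U \ K) = U := union_diff_cancel hKU
  have := μ.additive (Or.inr hK) (Or.inl (hU.sdiff hK.isClosed))
    (by rw [h]; exact Or.inl hU) disjoint_sdiff_self_right
  rw [h] at this
  rw [this]
  exact le_self_add

lemma tm_mono_kk {K L : Set X} (hK : IsCompact K) (hL : IsCompact L) (hKL : K ⊆ L) :
    μ.m K ≤ μ.m L := by
  rw [μ.outerRegular hL.isClosed]
  exact le_iInf fun U => le_iInf fun hU => le_iInf fun hLU =>
    tm_mono_ko μ hK hU (hKL.trans hLU)

lemma tm_mono {E F : Set X} (hE : IsOpen E ∨ IsCompact E) (hF : IsOpen F ∨ IsCompact F)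
    (hEF : E ⊆ F) : μ.m E ≤ μ.m F := by
  rcases hE with hEo | hEc
  · rw [μ.innerRegular hEo]
    refine iSup_le fun K => iSup_le fun hK => iSup_le fun hKE => ?_
    rcases hF with hFo | hFc
    · exact tm_mono_ko μ hK hFo (hKE.trans hEF)
    · exact tm_mono_kk μ hK hFc (hKE.trans hEF)
  · rcases hF with hFo | hFc
    · exact tm_mono_ko μ hEc hFo hEF
    · exact tm_mono_kk μ hEc hFc hEF

end aux

lemma branch_finish {fAB fA fB : ℝ → ℝ≥0∞} {c : ℝ≥0∞} {i s : ℝ}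
    (hmA : Measurable fA) (hmB : Measurable fB)
    (hanti : Antitone fA)
    (hbound : ∀ t ∈ Ioi (0:ℝ), fAB t ≤ c)
    (hpt : ∀ t ∈ Ioi (0:ℝ), ContinuousAt fA t → t ∉ Icc i s → fAB t ≤ fA t + fB t) :
    ∫⁻ t in Ioi 0, fAB t ≤ (∫⁻ t in Ioi 0, fA t) + (∫⁻ t in Ioi 0, fB t)
      + c * ENNReal.ofReal (s - i) := by
  have hD : (volume : Measure ℝ) {t | ¬ContinuousAt fA t} = 0 :=
    (hanti.countable_not_continuousAt).measure_zero _
  have h1 : ∀ᵐ t ∂(volume.restrict (Ioi (0:ℝ))), ContinuousAt fA t := by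
    refine ae_restrict_of_ae ?_
    rw [ae_iff]
    simpa using hD
  have h2 : ∀ᵐ t ∂(volume.restrict (Ioi (0:ℝ))), t ∈ Ioi (0:ℝ) :=
    ae_restrict_mem measurableSet_Ioi
  have hae : ∀ᵐ t ∂(volume.restrict (Ioi (0:ℝ))),
      fAB t ≤ fA t + fB t + (Icc i s).indicator (fun _ => c) t := by
    filter_upwards [h1, h2] with t hcont ht
    by_cases hI : t ∈ Icc i s
    · rw [indicator_of_mem hI]
      exact le_add_left (hbound t ht)
    · rw [indicator_of_notMem hI, add_zero]
      exact hpt t ht hcont hI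
  calc ∫⁻ t in Ioi (0:ℝ), fAB t
      ≤ ∫⁻ t in Ioi (0:ℝ), (fA t + fB t + (Icc i s).indicator (fun _ => c) t) :=
        lintegral_mono_ae hae
    _ = (∫⁻ t in Ioi (0:ℝ), fA t) + (∫⁻ t in Ioi (0:ℝ), fB t)
        + ∫⁻ t in Ioi (0:ℝ), (Icc i s).indicator (fun _ => c) t := by
        rw [lintegral_add_right _ (measurable_const.indicator measurableSet_Icc),
          lintegral_add_left hmA]
    _ ≤ (∫⁻ t in Ioi (0:ℝ), fA t) + (∫⁻ t in Ioi (0:ℝ), fB t) + c * ENNReal.ofReal (s - i) := by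
        gcongr
        rw [lintegral_indicator measurableSet_Icc, setLIntegral_const]
        gcongr
        calc (volume.restrict (Ioi (0:ℝ))) (Icc i s)
            = volume (Icc i s ∩ Ioi 0) := Measure.restrict_apply measurableSet_Icc
          _ ≤ volume (Icc i s) := measure_mono inter_subset_left
          _ = ENNReal.ofReal (s - i) := Real.volume_Icc

lemma key {X : Type*} [TopologicalSpace X] [T2Space X]
    (μ : TopologicalMeasure X)
    (g : X → ℝ) (hg : Continuous g) (hg0 : ∀ x, 0 ≤ g x)
    {C : ℝ} (hgC : ∀ x, g x ≤ C)
    (A B : Set X) (hd : Disjoint A B)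
    (hA : IsOpen A ∨ IsCompact A) (hB : IsOpen B ∨ IsCompact B)
    (hAB : IsOpen (A ∪ B) ∨ IsCompact (A ∪ B))
    (hcompat1 : IsCompact (A ∪ B) → (IsCompact A ∨ ¬ IsCompact B))
    (hcompat2 : ¬IsCompact (A ∪ B) → (¬IsCompact A ∨ IsCompact B)) :
    qint μ g (A ∪ B) ≤ qint μ g A + qint μ g B +
      μ.m (A ∪ B) * ENNReal.ofReal ((⨆ x : B, g x) - ⨅ x : B, g x) := by
  set iB := ⨅ x : B, g x with hiB
  set sB := ⨆ x : B, g x with hsB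
  have hIc : ∀ t : ℝ, IsClosed (g ⁻¹' Ici t) := fun t => isClosed_Ici.preimage hg
  have hIo : ∀ t : ℝ, IsOpen (g ⁻¹' Ioi t) := fun t => isOpen_Ioi.preimage hg
  have hgBlb : ∀ x ∈ B, iB ≤ g x := fun x hx =>
    ciInf_le ⟨0, by rintro _ ⟨y, rfl⟩; exact hg0 y⟩ (⟨x, hx⟩ : B)
  have hgBub : ∀ x ∈ B, g x ≤ sB := fun x hx =>
    le_ciSup ⟨C, by rintro _ ⟨y, rfl⟩; exact hgC y⟩ (⟨x, hx⟩ : B)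
  have hBfi : ∀ t : ℝ, t < iB → B ∩ g ⁻¹' (Ici t) = B := fun t ht =>
    inter_eq_left.2 fun x hx => le_of_lt (lt_of_lt_of_le ht (hgBlb x hx))
  have hBfo : ∀ t : ℝ, t < iB → B ∩ g ⁻¹' (Ioi t) = B := fun t ht =>
    inter_eq_left.2 fun x hx => lt_of_lt_of_le ht (hgBlb x hx)
  have hBei : ∀ t : ℝ, sB < t → B ∩ g ⁻¹' (Ici t) = ∅ := fun t ht =>
    eq_empty_iff_forall_notMem.2 fun x hx =>
      absurd ((hx.2.trans (hgBub x hx.1)).trans_lt ht) (lt_irrefl t)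
  have hBeo : ∀ t : ℝ, sB < t → B ∩ g ⁻¹' (Ioi t) = ∅ := fun t ht =>
    eq_empty_iff_forall_notMem.2 fun x hx =>
      absurd ((hx.2.le.trans (hgBub x hx.1)).trans_lt ht) (lt_irrefl t)
  have hsplit : ∀ t : ℝ, t ∉ Icc iB sB → t < iB ∨ sB < t := fun t ht => by
    rcases lt_or_ge t iB with h | h
    · exact Or.inl h
    · exact Or.inr (by by_contra h2; exact ht ⟨h, not_lt.1 h2⟩)
  have du : ∀ S : Set X, (A ∪ B) ∩ S = (A ∩ S) ∪ (B ∩ S) := fun S =>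
    union_inter_distrib_right A B S
  have hAid : ∀ S : Set X, ((A ∪ B) ∩ S) ∩ Bᶜ = A ∩ S := by
    intro S; ext x
    simp only [mem_inter_iff, mem_union, mem_compl_iff]
    constructor
    · rintro ⟨⟨hx | hx, hS⟩, hnB⟩
      exacts [⟨hx, hS⟩, absurd hx hnB]
    · rintro ⟨hxA, hS⟩
      exact ⟨⟨Or.inl hxA, hS⟩, disjoint_left.1 hd hxA⟩
  have hdis : ∀ S T : Set X, Disjoint (A ∩ S) (B ∩ T) := fun S T =>
    hd.mono inter_subset_left inter_subset_left
  have hdisB : ∀ S : Set X, Disjoint (A ∩ S) B := fun S => hd.mono_left inter_subset_left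
  have hantici : ∀ {E : Set X}, IsCompact E →
      Antitone (fun t : ℝ => μ.m (E ∩ g ⁻¹' (Ici t))) := fun {E} hE s t hst =>
    tm_mono μ (Or.inr (hE.inter_right (hIc _))) (Or.inr (hE.inter_right (hIc _)))
      (inter_subset_inter_right _ (preimage_mono (Ici_subset_Ici.2 hst)))
  have hantio : ∀ {E : Set X}, IsOpen E →
      Antitone (fun t : ℝ => μ.m (E ∩ g ⁻¹' (Ioi t))) := fun {E} hE s t hst =>
    tm_mono μ (Or.inl (hE.inter (hIo _))) (Or.inl (hE.inter (hIo _)))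
      (inter_subset_inter_right _ (preimage_mono (Ioi_subset_Ioi hst)))
  by_cases hABk : IsCompact (A ∪ B)
  · have hqAB : qint μ g (A ∪ B) = ∫⁻ t in Ioi (0:ℝ), μ.m ((A ∪ B) ∩ g ⁻¹' (Ici t)) :=
      if_pos hABk
    have hbound : ∀ t ∈ Ioi (0:ℝ), μ.m ((A ∪ B) ∩ g ⁻¹' (Ici t)) ≤ μ.m (A ∪ B) :=
      fun t _ => tm_mono μ (Or.inr (hABk.inter_right (hIc t))) (Or.inr hABk)
        inter_subset_left
    by_cases hAk : IsCompact A
    · have hqA : qint μ g A = ∫⁻ t in Ioi (0:ℝ), μ.m (A ∩ g ⁻¹' (Ici t)) := if_pos hAk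
      by_cases hBk : IsCompact B
      · -- A compact, B compact, A∪B compact
        have hqB : qint μ g B = ∫⁻ t in Ioi (0:ℝ), μ.m (B ∩ g ⁻¹' (Ici t)) := if_pos hBk
        rw [hqAB, hqA, hqB]
        refine branch_finish (hantici hAk).measurable (hantici hBk).measurable
          (hantici hAk) hbound ?_
        intro t ht _ _
        show μ.m ((A ∪ B) ∩ g ⁻¹' (Ici t)) ≤ μ.m (A ∩ g ⁻¹' (Ici t)) + μ.m (B ∩ g ⁻¹' (Ici t))
        rw [du (g ⁻¹' (Ici t)), μ.additive (Or.inr (hAk.inter_right (hIc t)))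
          (Or.inr (hBk.inter_right (hIc t)))
          (by rw [← du]; exact Or.inr (hABk.inter_right (hIc t))) (hdis _ _)]
      · -- A compact, B open, A∪B compact
        have hBo : IsOpen B := hB.resolve_right hBk
        have hqB : qint μ g B = ∫⁻ t in Ioi (0:ℝ), μ.m (B ∩ g ⁻¹' (Ioi t)) := if_neg hBk
        rw [hqAB, hqA, hqB]
        refine branch_finish (hantici hAk).measurable (hantio hBo).measurable
          (hantici hAk) hbound ?_
        intro t ht _ htI
        show μ.m ((A ∪ B) ∩ g ⁻¹' (Ici t)) ≤ μ.m (A ∩ g ⁻¹' (Ici t)) + μ.m (B ∩ g ⁻¹' (Ioi t))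
        rcases hsplit t htI with h | h
        · have e1 : (A ∪ B) ∩ g ⁻¹' (Ici t) = (A ∩ g ⁻¹' (Ici t)) ∪ B := by
            rw [du, hBfi t h]
          rw [e1, μ.additive (Or.inr (hAk.inter_right (hIc t))) (Or.inl hBo)
            (by rw [← e1]; exact Or.inr (hABk.inter_right (hIc t))) (hdisB _),
            hBfo t h]
        · have e1 : (A ∪ B) ∩ g ⁻¹' (Ici t) = A ∩ g ⁻¹' (Ici t) := by
            rw [du, hBei t h, union_empty]
          rw [e1]; exact le_self_add
    · -- A open noncompact, so B open noncompact, A∪B compact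
      have hBk : ¬ IsCompact B := (hcompat1 hABk).resolve_left hAk
      have hAo : IsOpen A := hA.resolve_right hAk
      have hBo : IsOpen B := hB.resolve_right hBk
      have hqA : qint μ g A = ∫⁻ t in Ioi (0:ℝ), μ.m (A ∩ g ⁻¹' (Ioi t)) := if_neg hAk
      have hqB : qint μ g B = ∫⁻ t in Ioi (0:ℝ), μ.m (B ∩ g ⁻¹' (Ioi t)) := if_neg hBk
      have hcomp : ∀ t : ℝ, IsCompact (A ∩ g ⁻¹' (Ici t)) := fun t => by
        rw [← hAid (g ⁻¹' (Ici t))]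
        exact (hABk.inter_right (hIc t)).inter_right (isClosed_compl_iff.2 hBo)
      have hkey : ∀ t : ℝ, ContinuousAt (fun t : ℝ => μ.m (A ∩ g ⁻¹' (Ioi t))) t →
          μ.m (A ∩ g ⁻¹' (Ici t)) ≤ μ.m (A ∩ g ⁻¹' (Ioi t)) := by
        intro t hcont
        refine ge_of_tendsto (hcont.continuousWithinAt (s := Iio t)) ?_
        filter_upwards [self_mem_nhdsWithin] with s hs
        exact tm_mono μ (Or.inr (hcomp t)) (Or.inl (hAo.inter (hIo s)))
          (inter_subset_inter_right _ (preimage_mono (Ici_subset_Ioi.2 hs)))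
      rw [hqAB, hqA, hqB]
      refine branch_finish (hantio hAo).measurable (hantio hBo).measurable
        (hantio hAo) hbound ?_
      intro t ht hcont htI
      show μ.m ((A ∪ B) ∩ g ⁻¹' (Ici t)) ≤ μ.m (A ∩ g ⁻¹' (Ioi t)) + μ.m (B ∩ g ⁻¹' (Ioi t))
      rcases hsplit t htI with h | h
      · have e1 : (A ∪ B) ∩ g ⁻¹' (Ici t) = (A ∩ g ⁻¹' (Ici t)) ∪ B := by
          rw [du, hBfi t h]
        rw [e1, μ.additive (Or.inr (hcomp t)) (Or.inl hBo)
          (by rw [← e1]; exact Or.inr (hABk.inter_right (hIc t))) (hdisB _)]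
        exact add_le_add (hkey t hcont) (by rw [hBfo t h])
      · have e1 : (A ∪ B) ∩ g ⁻¹' (Ici t) = A ∩ g ⁻¹' (Ici t) := by
          rw [du, hBei t h, union_empty]
        rw [e1]
        exact (hkey t hcont).trans le_self_add
  · have hABo : IsOpen (A ∪ B) := hAB.resolve_right hABk
    have hqAB : qint μ g (A ∪ B) = ∫⁻ t in Ioi (0:ℝ), μ.m ((A ∪ B) ∩ g ⁻¹' (Ioi t)) :=
      if_neg hABk
    have hbound : ∀ t ∈ Ioi (0:ℝ), μ.m ((A ∪ B) ∩ g ⁻¹' (Ioi t)) ≤ μ.m (A ∪ B) :=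
      fun t _ => tm_mono μ (Or.inl (hABo.inter (hIo t))) (Or.inl hABo) inter_subset_left
    by_cases hAk : IsCompact A
    · -- A compact, A∪B open, so B compact
      have hBk : IsCompact B := (hcompat2 hABk).resolve_left (not_not_intro hAk)
      have hqA : qint μ g A = ∫⁻ t in Ioi (0:ℝ), μ.m (A ∩ g ⁻¹' (Ici t)) := if_pos hAk
      have hqB : qint μ g B = ∫⁻ t in Ioi (0:ℝ), μ.m (B ∩ g ⁻¹' (Ici t)) := if_pos hBk
      have hAoi : ∀ t : ℝ, IsOpen (A ∩ g ⁻¹' (Ioi t)) := fun t => by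
        rw [← hAid (g ⁻¹' (Ioi t))]
        exact (hABo.inter (hIo t)).inter (isOpen_compl_iff.2 hBk.isClosed)
      have hmon : ∀ t : ℝ, μ.m (A ∩ g ⁻¹' (Ioi t)) ≤ μ.m (A ∩ g ⁻¹' (Ici t)) := fun t =>
        tm_mono μ (Or.inl (hAoi t)) (Or.inr (hAk.inter_right (hIc t)))
          (inter_subset_inter_right _ (preimage_mono Ioi_subset_Ici_self))
      rw [hqAB, hqA, hqB]
      refine branch_finish (hantici hAk).measurable (hantici hBk).measurable
        (hantici hAk) hbound ?_
      intro t ht _ htI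
      show μ.m ((A ∪ B) ∩ g ⁻¹' (Ioi t)) ≤ μ.m (A ∩ g ⁻¹' (Ici t)) + μ.m (B ∩ g ⁻¹' (Ici t))
      rcases hsplit t htI with h | h
      · have e1 : (A ∪ B) ∩ g ⁻¹' (Ioi t) = (A ∩ g ⁻¹' (Ioi t)) ∪ B := by
          rw [du, hBfo t h]
        rw [e1, μ.additive (Or.inl (hAoi t)) (Or.inr hBk)
          (by rw [← e1]; exact Or.inl (hABo.inter (hIo t))) (hdisB _)]
        exact add_le_add (hmon t) (by rw [hBfi t h])
      · have e1 : (A ∪ B) ∩ g ⁻¹' (Ioi t) = A ∩ g ⁻¹' (Ioi t) := by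
          rw [du, hBeo t h, union_empty]
        rw [e1]
        exact (hmon t).trans le_self_add
    · have hAo : IsOpen A := hA.resolve_right hAk
      have hqA : qint μ g A = ∫⁻ t in Ioi (0:ℝ), μ.m (A ∩ g ⁻¹' (Ioi t)) := if_neg hAk
      by_cases hBk : IsCompact B
      · -- A open, B compact, A∪B open
        have hqB : qint μ g B = ∫⁻ t in Ioi (0:ℝ), μ.m (B ∩ g ⁻¹' (Ici t)) := if_pos hBk
        rw [hqAB, hqA, hqB]
        refine branch_finish (hantio hAo).measurable (hantici hBk).measurable
          (hantio hAo) hbound ?_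
        intro t ht _ htI
        show μ.m ((A ∪ B) ∩ g ⁻¹' (Ioi t)) ≤ μ.m (A ∩ g ⁻¹' (Ioi t)) + μ.m (B ∩ g ⁻¹' (Ici t))
        rcases hsplit t htI with h | h
        · have e1 : (A ∪ B) ∩ g ⁻¹' (Ioi t) = (A ∩ g ⁻¹' (Ioi t)) ∪ B := by
            rw [du, hBfo t h]
          rw [e1, μ.additive (Or.inl (hAo.inter (hIo t))) (Or.inr hBk)
            (by rw [← e1]; exact Or.inl (hABo.inter (hIo t))) (hdisB _)]
          exact add_le_add le_rfl (by rw [hBfi t h])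
        · have e1 : (A ∪ B) ∩ g ⁻¹' (Ioi t) = A ∩ g ⁻¹' (Ioi t) := by
            rw [du, hBeo t h, union_empty]
          rw [e1]; exact le_self_add
      · -- A open, B open, A∪B open
        have hBo : IsOpen B := hB.resolve_right hBk
        have hqB : qint μ g B = ∫⁻ t in Ioi (0:ℝ), μ.m (B ∩ g ⁻¹' (Ioi t)) := if_neg hBk
        rw [hqAB, hqA, hqB]
        refine branch_finish (hantio hAo).measurable (hantio hBo).measurable
          (hantio hAo) hbound ?_
        intro t ht _ _
        show μ.m ((A ∪ B) ∩ g ⁻¹' (Ioi t)) ≤ μ.m (A ∩ g ⁻¹' (Ioi t)) + μ.m (B ∩ g ⁻¹' (Ioi t))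
        rw [du (g ⁻¹' (Ioi t)), μ.additive (Or.inl (hAo.inter (hIo t)))
          (Or.inl (hBo.inter (hIo t)))
          (by rw [← du]; exact Or.inl (hABo.inter (hIo t))) (hdis _ _)]
/-- Let `μ` be a compact-finite topological measure on a locally compact
Hausdorff space, `g ∈ C₀⁺(X)`, and `A, B` disjoint nonempty sets such that each of `A`,
`B`, `A ⊔ B` is open or compact and `μ(A ⊔ B) < ∞`. Then
`∫_{A⊔B} g dμ ≤ ∫_A g dμ + ∫_B g dμ + μ(A⊔B)·max{ω(g,A), ω(g,B)}`,
where `ω(g,E) = sup_E g − inf_E g`. -/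
theorem stmt10 {X : Type*} [TopologicalSpace X] [LocallyCompactSpace X] [T2Space X]
    (μ : TopologicalMeasure X)
    (hcf : ∀ K : Set X, IsCompact K → μ.m K < ∞)
    (g : X → ℝ) (hg : Continuous g) (hg0 : ∀ x, 0 ≤ g x)
    (hginf : Tendsto g (cocompact X) (nhds 0))
    (A B : Set X) (hAne : A.Nonempty) (hBne : B.Nonempty) (hd : Disjoint A B)
    (hA : IsOpen A ∨ IsCompact A) (hB : IsOpen B ∨ IsCompact B)
    (hAB : IsOpen (A ∪ B) ∨ IsCompact (A ∪ B))
    (hfin : μ.m (A ∪ B) < ∞) :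
    qint μ g (A ∪ B) ≤ qint μ g A + qint μ g B +
      μ.m (A ∪ B) * ENNReal.ofReal
        (max ((⨆ x : A, g x) - ⨅ x : A, g x) ((⨆ x : B, g x) - ⨅ x : B, g x)) := by
  obtain ⟨C, hgC⟩ : ∃ C : ℝ, ∀ x, g x ≤ C := by
    have h1 : ∀ᶠ x in cocompact X, g x < 1 := hginf.eventually (gt_mem_nhds zero_lt_one)
    rcases mem_cocompact.mp h1 with ⟨K, hK, hKs⟩
    rcases K.eq_empty_or_nonempty with rfl | hne
    · exact ⟨1, fun x => le_of_lt (hKs (by simp))⟩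
    · obtain ⟨x₀, _, hmax⟩ := hK.exists_isMaxOn hne hg.continuousOn
      refine ⟨max (g x₀) 1, fun x => ?_⟩
      by_cases hx : x ∈ K
      · exact le_max_of_le_left (hmax hx)
      · exact le_max_of_le_right (le_of_lt (hKs hx))
  by_cases hABk : IsCompact (A ∪ B)
  · by_cases hok : IsCompact A ∨ ¬ IsCompact B
    · refine (key μ g hg hg0 hgC A B hd hA hB hAB (fun _ => hok)
        (fun h => (h hABk).elim)).trans ?_
      gcongr
      exact le_max_right _ _
    · push_neg at hok
      have h2 := key μ g hg hg0 hgC B A hd.symm hB hA (by rwa [union_comm])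
        (fun _ => Or.inl hok.2)
        (fun h => (h (by rw [union_comm]; exact hABk)).elim)
      rw [union_comm B A] at h2
      calc qint μ g (A ∪ B) ≤ qint μ g B + qint μ g A +
            μ.m (A ∪ B) * ENNReal.ofReal ((⨆ x : A, g x) - ⨅ x : A, g x) := h2
        _ ≤ _ := by
            rw [add_comm (qint μ g B)]
            gcongr
            exact le_max_left _ _
  · by_cases hok : ¬ IsCompact A ∨ IsCompact B
    · refine (key μ g hg hg0 hgC A B hd hA hB hAB (fun h => (hABk h).elim)
        (fun _ => hok)).trans ?_
      gcongr
      exact le_max_right _ _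
    · push_neg at hok
      have h2 := key μ g hg hg0 hgC B A hd.symm hB hA (by rwa [union_comm])
        (fun h => ((fun hh => hABk (by rwa [union_comm] at h)) h).elim)
        (fun _ => Or.inr hok.1)
      rw [union_comm B A] at h2
      calc qint μ g (A ∪ B) ≤ qint μ g B + qint μ g A +
            μ.m (A ∪ B) * ENNReal.ofReal ((⨆ x : A, g x) - ⨅ x : A, g x) := h2
        _ ≤ _ := by
            rw [add_comm (qint μ g B)]
            gcongr
            exact le_max_left _ _
end

section
/- Let μ be a deficient topological measure on a locally compact Hausdorff space X such that μ takes only finitely many values, μ(X) < ∞, and μ is not a topological measure, in the sense that there exist an open set U and a compact set C ⊆ U with μ(C) + μ(U \ C) < μ(U). Then there exists a continuous compactly supported function f ≥ 0 on X such that ∫_X f dμ = 0 while ∫_X (−f) dμ < 0; explicitly, ∫₀^∞ μ(f⁻¹((t,∞))) dt = 0 while aμ(X) + ∫_a^0 μ((−f)⁻¹((t,∞))) dt < 0, where a = −max_{x∈X} f(x). -/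
/-!
Since `μ` takes finitely many values, the suprema and infima in the regularity axioms are
attained. Hence a compact `A` inside an open `U` has a compact neighbourhood `L ⊆ U` all of whose
compact subsets have value at most `μ A`; its shell `L \ interior L` is null, and a compact set
avoiding the shell splits additively into its parts in `L` and off `interior L`. Two such shells,
one around `C ∪ E` with `E ⊆ U \ C` a compact of value `μ (U \ C)`, and one around a compact
`D ⊆ U` of value `μ U`, form a null compact `K` with
`μ Kᶜ + μ U ≤ μ C + μ (U \ C) + μ X < μ U + μ X`. An Urysohn function equal to `1` on `K`
and supported in a null open neighbourhood of `K` has quasi-integral `0`, while the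
quasi-integral of its negative is at most `μ Kᶜ - μ X < 0`.
-/

open MeasureTheory Set Filter Topology ENNReal

namespace DeficientTopologicalMeasure

variable {X : Type*} [TopologicalSpace X] (μ : DeficientTopologicalMeasure X)

lemma m_mono_isCompact_isOpen {K W : Set X} (hK : IsCompact K) (hW : IsOpen W) (hKW : K ⊆ W) :
    μ.m K ≤ μ.m W :=
  μ.innerRegular hW ▸ le_iSup₂_of_le K hK (le_iSup_of_le hKW le_rfl)

lemma m_mono_isOpen {W W' : Set X} (hW : IsOpen W) (hW' : IsOpen W') (h : W ⊆ W') :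
    μ.m W ≤ μ.m W' :=
  μ.innerRegular hW ▸ iSup₂_le fun _ hK => iSup_le fun hKW =>
    μ.m_mono_isCompact_isOpen hK hW' (hKW.trans h)

lemma m_le_univ_of_isCompact {K : Set X} (hK : IsCompact K) : μ.m K ≤ μ.m univ :=
  μ.m_mono_isCompact_isOpen hK isOpen_univ (subset_univ K)

lemma m_eq_zero_of_disjoint {A S M : Set X} (hA : IsCompact A) (hAS : A ⊆ S)
    (hAfin : μ.m A ≠ ∞) (hmax : ∀ K, IsCompact K → K ⊆ S → μ.m K ≤ μ.m A)
    (hM : IsCompact M) (hMS : M ⊆ S) (hMA : Disjoint M A) : μ.m M = 0 := by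
  have h := hmax _ (hM.union hA) (union_subset hMS hAS)
  rw [μ.additive hM hA hMA] at h
  exact nonpos_iff_eq_zero.mp ((ENNReal.add_le_add_iff_right hAfin).mp (by simpa using h))

lemma m_diff_interior_eq_zero {A L : Set X} (hA : IsCompact A) (hL : IsCompact L)
    (hAL : A ⊆ interior L) (hAfin : μ.m A ≠ ∞)
    (hmax : ∀ K, IsCompact K → K ⊆ L → μ.m K ≤ μ.m A) :
    μ.m (L \ interior L) = 0 :=
  μ.m_eq_zero_of_disjoint hA (hAL.trans interior_subset) hAfin hmax (hL.diff isOpen_interior)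
    sdiff_subset (disjoint_left.mpr fun _ hx hxA => hx.2 (hAL hxA))

lemma m_add_m_le_univ {P D : Set X} (hP : IsCompact P) (hD : IsCompact D) (hPD : Disjoint P D) :
    μ.m P + μ.m D ≤ μ.m univ :=
  μ.additive hP hD hPD ▸ μ.m_le_univ_of_isCompact (hP.union hD)

lemma m_eq_inter_add_diff_interior [T2Space X] {P L : Set X} (hP : IsCompact P)
    (hL : IsCompact L) (hPL : Disjoint P (L \ interior L)) :
    μ.m P = μ.m (P ∩ L) + μ.m (P \ interior L) := by
  have hcover : P = (P ∩ L) ∪ (P \ interior L) := by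
    ext x
    by_cases hx : x ∈ interior L
    · simp [hx, interior_subset hx]
    · simp +contextual [hx]
  have hdisj : Disjoint (P ∩ L) (P \ interior L) :=
    disjoint_left.mpr fun x ⟨hxP, hxL⟩ ⟨_, hxi⟩ => disjoint_left.mp hPL hxP ⟨hxL, hxi⟩
  conv_lhs => rw [hcover]
  exact μ.additive (hP.inter_right hL.isClosed) (hP.diff isOpen_interior) hdisj

section FiniteValues

variable {μ}

lemma exists_isCompact_subset_m_eq [T2Space X]
    (hfin : (μ.m '' {A : Set X | IsOpen A ∨ IsClosed A}).Finite) {W : Set X} (hW : IsOpen W) :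
    ∃ A, IsCompact A ∧ A ⊆ W ∧ μ.m A = μ.m W := by
  let S := {A : Set X // IsCompact A ∧ A ⊆ W}
  have : Nonempty S := ⟨⟨∅, isCompact_empty, empty_subset W⟩⟩
  have hrange : (range fun A : S => μ.m A).Finite :=
    hfin.subset <| range_subset_iff.mpr fun A => ⟨A, Or.inr A.2.1.isClosed, rfl⟩
  obtain ⟨⟨A, hA, hAW⟩, hAmax : μ.m A = _⟩ :=
    (range_nonempty (fun A : S => μ.m A)).csSup_mem hrange
  refine ⟨A, hA, hAW, le_antisymm (μ.m_mono_isCompact_isOpen hA hW hAW) ?_⟩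
  rw [μ.innerRegular hW, hAmax]
  exact iSup₂_le fun K hK => iSup_le fun hKW => le_sSup ⟨⟨K, hK, hKW⟩, rfl⟩

lemma exists_isOpen_superset_m_eq
    (hfin : (μ.m '' {A : Set X | IsOpen A ∨ IsClosed A}).Finite) {F : Set X} (hF : IsClosed F) :
    ∃ W, IsOpen W ∧ F ⊆ W ∧ μ.m W = μ.m F := by
  let S := {W : Set X // IsOpen W ∧ F ⊆ W}
  have : Nonempty S := ⟨⟨univ, isOpen_univ, subset_univ F⟩⟩
  have hrange : (range fun W : S => μ.m W).Finite :=
    hfin.subset <| range_subset_iff.mpr fun W => ⟨W, Or.inl W.2.1, rfl⟩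
  obtain ⟨⟨W, hW, hFW⟩, hWmin : μ.m W = _⟩ :=
    (range_nonempty (fun W : S => μ.m W)).csInf_mem hrange
  refine ⟨W, hW, hFW, le_antisymm ?_ ?_⟩
  · rw [μ.outerRegular hF, hWmin]
    exact le_iInf₂ fun V hV => le_iInf fun hFV => sInf_le ⟨⟨V, hV, hFV⟩, rfl⟩
  · rw [μ.outerRegular hF]
    exact iInf₂_le_of_le W hW (iInf_le_of_le hFW le_rfl)

lemma exists_compact_nbhd_m_le [T2Space X] [LocallyCompactSpace X]
    (hfin : (μ.m '' {A : Set X | IsOpen A ∨ IsClosed A}).Finite) {A U : Set X}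
    (hA : IsCompact A) (hU : IsOpen U) (hAU : A ⊆ U) :
    ∃ L, IsCompact L ∧ A ⊆ interior L ∧ L ⊆ U ∧
      ∀ K, IsCompact K → K ⊆ L → μ.m K ≤ μ.m A := by
  obtain ⟨W, hW, hAW, hWA⟩ := exists_isOpen_superset_m_eq hfin hA.isClosed
  obtain ⟨L, hL, hAL, hLWU⟩ :=
    exists_compact_between hA (hW.inter hU) (subset_inter hAW hAU)
  exact ⟨L, hL, hAL, hLWU.trans inter_subset_right, fun K hK hKL =>
    hWA ▸ μ.m_mono_isCompact_isOpen hK hW (hKL.trans (hLWU.trans inter_subset_left))⟩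

lemma exists_shell_m_le_add [T2Space X] [LocallyCompactSpace X]
    (hfin : (μ.m '' {A : Set X | IsOpen A ∨ IsClosed A}).Finite) (hμ : μ.m univ ≠ ∞)
    {U C : Set X} (hU : IsOpen U) (hC : IsCompact C) (hCU : C ⊆ U) :
    ∃ L, IsCompact L ∧ L ⊆ U ∧ μ.m (L \ interior L) = 0 ∧
      ∀ Q, IsCompact Q → Q ⊆ U → Disjoint Q (L \ interior L) →
        μ.m Q ≤ μ.m C + μ.m (U \ C) := by
  have hUC : IsOpen (U \ C) := hU.sdiff hC.isClosed
  obtain ⟨E, hE, hEUC, hEval⟩ := exists_isCompact_subset_m_eq hfin hUC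
  have hEmax : ∀ K, IsCompact K → K ⊆ U \ C → μ.m K ≤ μ.m E := fun K hK hKUC =>
    hEval ▸ μ.m_mono_isCompact_isOpen hK hUC hKUC
  have hCE : μ.m (C ∪ E) = μ.m C + μ.m (U \ C) := by
    rw [μ.additive hC hE (disjoint_left.mpr fun _ hxC hxE => (hEUC hxE).2 hxC), hEval]
  obtain ⟨L, hL, hCEL, hLU, hLmax⟩ :=
    exists_compact_nbhd_m_le hfin (hC.union hE) hU (union_subset hCU (hEUC.trans sdiff_subset))
  refine ⟨L, hL, hLU, μ.m_diff_interior_eq_zero (hC.union hE) hL hCEL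
    (ne_top_of_le_ne_top hμ (μ.m_le_univ_of_isCompact (hC.union hE))) hLmax,
    fun Q hQ hQU hQL => ?_⟩
  have hinner : μ.m (Q ∩ L) ≤ μ.m (C ∪ E) :=
    hLmax _ (hQ.inter_right hL.isClosed) inter_subset_right
  have houter : μ.m (Q \ interior L) = 0 :=
    μ.m_eq_zero_of_disjoint hE hEUC (ne_top_of_le_ne_top hμ (μ.m_le_univ_of_isCompact hE)) hEmax
      (hQ.diff isOpen_interior) (fun x hx => ⟨hQU hx.1, fun hxC => hx.2 (hCEL (Or.inl hxC))⟩)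
      (disjoint_left.mpr fun _ hx hxE => hx.2 (hCEL (Or.inr hxE)))
  rw [μ.m_eq_inter_add_diff_interior hQ hL hQL, houter, add_zero, ← hCE]
  exact hinner

lemma exists_isCompact_m_eq_zero_m_compl_lt [T2Space X] [LocallyCompactSpace X]
    (hfin : (μ.m '' {A : Set X | IsOpen A ∨ IsClosed A}).Finite) (hμ : μ.m univ ≠ ∞)
    {U C : Set X} (hU : IsOpen U) (hC : IsCompact C) (hCU : C ⊆ U)
    (hlt : μ.m C + μ.m (U \ C) < μ.m U) :
    ∃ K, IsCompact K ∧ μ.m K = 0 ∧ μ.m Kᶜ < μ.m univ := by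
  obtain ⟨L₁, hL₁, hL₁U, hL₁0, hL₁est⟩ := exists_shell_m_le_add hfin hμ hU hC hCU
  obtain ⟨D, hD, hDU, hDval⟩ := exists_isCompact_subset_m_eq hfin hU
  obtain ⟨L₂, hL₂, hDL₂, hL₂U, hL₂max⟩ :=
    exists_compact_nbhd_m_le hfin (hD.union hL₁) hU (union_subset hDU hL₁U)
  have hL₁L₂ : L₁ ⊆ interior L₂ := subset_union_right.trans hDL₂
  set K := (L₁ \ interior L₁) ∪ (L₂ \ interior L₂)
  have hK : IsCompact K := (hL₁.diff isOpen_interior).union (hL₂.diff isOpen_interior)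
  have hK0 : μ.m K = 0 := by
    rw [μ.additive (hL₁.diff isOpen_interior) (hL₂.diff isOpen_interior)
      (disjoint_left.mpr fun _ hx₁ hx₂ => hx₂.2 (hL₁L₂ hx₁.1)), hL₁0,
      μ.m_diff_interior_eq_zero (hD.union hL₁) hL₂ hDL₂
        (ne_top_of_le_ne_top hμ (μ.m_le_univ_of_isCompact (hD.union hL₁))) hL₂max, add_zero]
  have hest : ∀ P, IsCompact P → Disjoint P K →
      μ.m P + μ.m U ≤ μ.m C + μ.m (U \ C) + μ.m univ := by
    intro P hP hPK
    have hinner : μ.m (P ∩ L₂) ≤ μ.m C + μ.m (U \ C) :=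
      hL₁est _ (hP.inter_right hL₂.isClosed) (inter_subset_right.trans hL₂U)
        ((hPK.mono_right subset_union_left).mono_left inter_subset_left)
    have houter : μ.m (P \ interior L₂) + μ.m U ≤ μ.m univ :=
      hDval ▸ μ.m_add_m_le_univ (hP.diff isOpen_interior) hD
        (disjoint_left.mpr fun _ hx hxD => hx.2 (hDL₂ (Or.inl hxD)))
    rw [μ.m_eq_inter_add_diff_interior hP hL₂ (hPK.mono_right subset_union_right), add_assoc]
    exact add_le_add hinner houter
  obtain ⟨P, hP, hPK, hPval⟩ := exists_isCompact_subset_m_eq hfin hK.isClosed.isOpen_compl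
  refine ⟨K, hK, hK0, lt_of_add_lt_add_right (a := μ.m U) ?_⟩
  calc μ.m Kᶜ + μ.m U ≤ μ.m C + μ.m (U \ C) + μ.m univ :=
        hPval ▸ hest P hP (subset_compl_iff_disjoint_right.mp hPK)
    _ < μ.m U + μ.m univ := ENNReal.add_lt_add_right hμ hlt
    _ = μ.m univ + μ.m U := add_comm _ _

end FiniteValues

end DeficientTopologicalMeasure

namespace DeficientTopologicalMeasure

variable {X : Type*} [TopologicalSpace X] (μ : DeficientTopologicalMeasure X)

lemma lintegral_m_preimage_Ioi_eq_zero {f : X → ℝ} (hf : Continuous f) {V : Set X}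
    (hV : IsOpen V) (hV0 : μ.m V = 0) (hfV : ∀ x ∉ V, f x ≤ 0) :
    ∫⁻ t in Ioi (0 : ℝ), μ.m (f ⁻¹' Ioi t) = 0 := by
  have hnull : ∀ t ∈ Ioi (0 : ℝ), μ.m (f ⁻¹' Ioi t) = 0 := fun t ht =>
    nonpos_iff_eq_zero.mp <| hV0 ▸ μ.m_mono_isOpen (isOpen_Ioi.preimage hf) hV fun x hx => by
      by_contra hxV
      exact (hfV x hxV).not_gt (lt_trans ht hx)
  rw [setLIntegral_congr_fun measurableSet_Ioi hnull, lintegral_zero]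

lemma neg_add_integral_m_preimage_lt_zero (hμ : μ.m univ ≠ ∞) {f : X → ℝ}
    (hf : Continuous f) {K : Set X} (hK : IsClosed K) (hKf : ∀ x ∈ K, 1 ≤ f x)
    (hlt : μ.m Kᶜ < μ.m univ) :
    -1 * (μ.m univ).toReal +
      ∫ t in (-1 : ℝ)..0, (μ.m ((fun x => -f x) ⁻¹' Ioi t)).toReal < 0 := by
  have hKfin : μ.m Kᶜ ≠ ∞ := hlt.ne_top
  have hbound : ∀ t ∈ uIoc (-1 : ℝ) 0,
      ‖(μ.m ((fun x => -f x) ⁻¹' Ioi t)).toReal‖ ≤ (μ.m Kᶜ).toReal := by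
    intro t ht
    rw [Real.norm_of_nonneg ENNReal.toReal_nonneg]
    refine ENNReal.toReal_mono hKfin (μ.m_mono_isOpen (isOpen_Ioi.preimage hf.neg)
      hK.isOpen_compl fun x (hx : t < -f x) hxK => ?_)
    linarith [hKf x hxK, (uIoc_of_le (by norm_num : (-1 : ℝ) ≤ 0) ▸ ht).1]
  have hint := (le_abs_self _).trans (intervalIntegral.norm_integral_le_of_norm_le_const hbound)
  have hKlt := (ENNReal.toReal_lt_toReal hKfin hμ).mpr hlt
  norm_num at hint
  linarith

end DeficientTopologicalMeasure

/-- Let `μ` be a deficient topological measure on a locally compact Hausdorff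
space that takes only finitely many values on open and closed sets, with `μ(X) < ∞`, and
which is not a topological measure: there are an open `U` and a compact `C ⊆ U` with
`μ(C) + μ(U \ C) < μ(U)`. Then there is a continuous compactly supported `f ≥ 0` with
`∫_X f dμ = 0` but `∫_X (−f) dμ < 0`; explicitly `∫₀^∞ μ(f⁻¹((t,∞))) dt = 0` while
`aμ(X) + ∫_a^0 μ((−f)⁻¹((t,∞))) dt < 0`, where `a = −sup f`. -/
theorem stmt16 {X : Type*} [TopologicalSpace X] [LocallyCompactSpace X] [T2Space X]
    (μ : DeficientTopologicalMeasure X)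
    (hfinval : (μ.m '' {A : Set X | IsOpen A ∨ IsClosed A}).Finite)
    (hμfin : μ.m univ < ∞)
    (hnottm : ∃ (U C : Set X), IsOpen U ∧ IsCompact C ∧ C ⊆ U ∧
      μ.m C + μ.m (U \ C) < μ.m U) :
    ∃ f : X → ℝ, Continuous f ∧ HasCompactSupport f ∧ (∀ x, 0 ≤ f x) ∧
      (∫⁻ t in Ioi (0 : ℝ), μ.m (f ⁻¹' (Ioi t))) = 0 ∧
      (-(⨆ x, f x)) * (μ.m univ).toReal +
        (∫ t in (-(⨆ x, f x))..(0 : ℝ),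
          (μ.m ((fun x => -f x) ⁻¹' (Ioi t))).toReal) < 0 := by
  obtain ⟨U, C, hU, hC, hCU, hlt⟩ := hnottm
  obtain ⟨K, hK, hK0, hKc⟩ :=
    μ.exists_isCompact_m_eq_zero_m_compl_lt hfinval hμfin.ne hU hC hCU hlt
  obtain ⟨V, hV, hKV, hVK⟩ := μ.exists_isOpen_superset_m_eq hfinval hK.isClosed
  obtain ⟨f, hf1, hf0, hfc, hf01⟩ := exists_continuous_one_zero_of_isCompact hK
    hV.isClosed_compl (disjoint_compl_right_iff_subset.mpr hKV)
  obtain ⟨x₀, hx₀⟩ : K.Nonempty :=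
    nonempty_iff_ne_empty.mpr fun h => by simp [h] at hKc
  have : Nonempty X := ⟨x₀⟩
  have hsup : ⨆ x, f x = 1 := le_antisymm (ciSup_le fun x => (hf01 x).2)
    (le_ciSup_of_le ⟨1, forall_mem_range.mpr fun x => (hf01 x).2⟩ x₀ (hf1 hx₀).ge)
  refine ⟨f, f.continuous, hfc, fun x => (hf01 x).1,
    μ.lintegral_m_preimage_Ioi_eq_zero f.continuous hV (hVK.trans hK0)
      fun x hx => (hf0 hx).le, ?_⟩
  rw [hsup]
  exact μ.neg_add_integral_m_preimage_lt_zero hμfin.ne f.continuous hK.isClosed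
    (fun x hx => (hf1 hx).ge) hKc
end
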